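/- arXiv:1901.01917 — 2 statements merged into one kernel-verified Lean document; each statement's English description precedes it below -/
import Mathlib

section
/- Let B = [0,1]² and let s₁, s₂ be the antipode maps on ∂B associated to two directions with real slopes m₁ and m₂ satisfying 0 < m₁ < 1 and m₂ < −1. Let O be the four-point set O = {((m₁−1)/(m₁+m₂), 0), (1, m₁(1+m₂)/(m₁+m₂)), ((1+m₂)/(m₁+m₂), 1), (0, m₂(1−m₁)/(m₁+m₂))} = {o₁, o₂, o₃, o₄}. Then: (i) s₁o₁ = o₂, s₂o₂ = o₃, s₁o₃ = o₄, and s₂o₄ = o₁, so O is a periodic orbit; (ii) O is the only finite orbit: if b ∈ ∂B and a forward alternating sequence x₀ = b, x_{n+1} = s_{r_n} x_n (with r_n alternating between 1 and 2) satisfies x_{n+1} ≠ x_n for all n ≥ 0 and takes only finitely many values, then b ∈ O; and (iii) if b ∈ ∂B \ O and a forward alternating sequence (x_n) from b satisfies x_{n+1} ≠ x_n for all n ≥ 0 (it never stops at a corner), then the distance from x_n to the set O tends to 0 as n → ∞. -/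
/-! Common definitions: boards, pieces, hyperplane arrangements, rank,
antipode maps, trajectories, augmentations, crossing points, denominators. -/

noncomputable section

/-- A point of the plane. -/
abbrev Pt : Type := ℝ × ℝ

/-- Dot product on `ℝ²`. -/
def dotp (u v : Pt) : ℝ := u.1 * v.1 + u.2 * v.2

/-- A board: a rational convex polygon `{z | ∀ j, a_j · z ≤ β_j}`, bounded, with
nonempty interior, each defining line meeting the board in at least two points (an edge). -/
structure Board where
  s : ℕ
  A : Fin s → Pt
  β : Fin s → ℝ
  A_rat : ∀ j, ∃ p q : ℚ, A j = ((p : ℝ), (q : ℝ))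
  β_rat : ∀ j, ∃ p : ℚ, β j = (p : ℝ)
  bounded : Bornology.IsBounded {z : Pt | ∀ j, dotp (A j) z ≤ β j}
  int_ne : (interior {z : Pt | ∀ j, dotp (A j) z ≤ β j}).Nonempty
  edges : ∀ j, ∃ u v : Pt, u ≠ v ∧ (∀ k, dotp (A k) u ≤ β k) ∧ (∀ k, dotp (A k) v ≤ β k) ∧
    dotp (A j) u = β j ∧ dotp (A j) v = β j

/-- The set of points of the board. -/
def Board.set (Bd : Board) : Set Pt := {z | ∀ j, dotp (Bd.A j) z ≤ Bd.β j}

/-- The corners of the board: its extreme points. -/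
def Board.corners (Bd : Board) : Set Pt := Set.extremePoints ℝ Bd.set

/-- A two-move rider: two nonparallel basic moves `(c r, d r)`, each with coprime entries. -/
structure Piece where
  c : Bool → ℤ
  d : Bool → ℤ
  coprime : ∀ r, Int.gcd (c r) (d r) = 1
  nonparallel : c false * d true - c true * d false ≠ 0

/-- The basic move vector of `P` of type `r`, as a vector in `ℝ²`. -/
def Piece.mv (P : Piece) (r : Bool) : Pt := ((P.c r : ℝ), (P.d r : ℝ))

/-- The normal vector `(d_r, -c_r)` of the attack equations of type `r`. -/
def Piece.anorm (P : Piece) (r : Bool) : Pt := ((P.d r : ℝ), -(P.c r : ℝ))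

/-- A configuration of `q` points in the plane; the configuration space is `ℝ^{2q}`. -/
abbrev Conf (q : ℕ) : Type := Fin q → Pt

/-- Dot product on the configuration space `ℝ^{2q}`. -/
def confDot {q : ℕ} (u w : Conf q) : ℝ := ∑ k, dotp (u k) (w k)

/-- The vector of `ℝ^{2q}` whose `i`-th planar component is `v` and all others `0`. -/
def unitVec {q : ℕ} (i : Fin q) (v : Pt) : Conf q := fun k => if k = i then v else 0

/-- The normal vector in `ℝ^{2q}` of the attack hyperplane `(w_i - w_j) · v = 0`. -/
def attackNormal {q : ℕ} (i j : Fin q) (v : Pt) : Conf q :=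
  fun k => if k = i then v else if k = j then -v else 0

/-- The hyperplane arrangement `H(z)` associated to a configuration `z`: each hyperplane
`{w | n · w = β}` is recorded as the pair `(n, β)`.  It consists of the attack hyperplanes
through `z` and the fixation hyperplanes through `z`. -/
def HArr (Bd : Board) (P : Piece) {q : ℕ} (z : Conf q) : Set (Conf q × ℝ) :=
  {h | (∃ i j : Fin q, ∃ r : Bool, i < j ∧ dotp (z i - z j) (P.anorm r) = 0 ∧
          h = (attackNormal i j (P.anorm r), 0)) ∨
       (∃ i : Fin q, ∃ e : Fin Bd.s, dotp (Bd.A e) (z i) = Bd.β e ∧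
          h = (unitVec i (Bd.A e), Bd.β e))}

/-- The rank of a configuration `z`: the dimension of the span of the normal vectors
of the hyperplanes of `H(z)`. -/
def confRank (Bd : Board) (P : Piece) {q : ℕ} (z : Conf q) : ℕ :=
  Module.finrank ℝ (Submodule.span ℝ (Prod.fst '' HArr Bd P z))

/-- A configuration has full rank when its rank is `2q`. -/
def FullRank (Bd : Board) (P : Piece) {q : ℕ} (z : Conf q) : Prop :=
  confRank Bd P z = 2 * q

/-- `z ∈ B^q`. -/
def InBoard (Bd : Board) {q : ℕ} (z : Conf q) : Prop := ∀ i, z i ∈ Bd.set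

/-- A vertex of the inside-out polytope `(B^q, A_P^q)`: a point of `B^q` that is the unique
common point of some subset of its associated hyperplane arrangement. -/
def IsVertex (Bd : Board) (P : Piece) {q : ℕ} (z : Conf q) : Prop :=
  InBoard Bd z ∧
    ∃ H' ⊆ HArr Bd P z, {w : Conf q | ∀ h ∈ H', confDot h.1 w = h.2} = {z}

/-- The line through `b` in direction `v` meets the interior of `R`. -/
def meetsInterior (R : Set Pt) (v : Pt) (b : Pt) : Prop := ∃ t : ℝ, b + t • v ∈ interior R

/-- `b'` is the antipode of `b` in direction `v`: if the line through `b` with direction `v`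
misses the interior of `R` then `b' = b`; otherwise `b'` is the second intersection point of
the line with the boundary of `R`. -/
def AntipRel (R : Set Pt) (v : Pt) (b b' : Pt) : Prop :=
  (¬ meetsInterior R v b → b' = b) ∧
  (meetsInterior R v b → b' ∈ frontier R ∧ b' ≠ b ∧ ∃ t : ℝ, b' = b + t • v)

/-- `s` is the antipode map of `R` in direction `v`. -/
def IsAntipodeMap (R : Set Pt) (v : Pt) (s : Pt → Pt) : Prop :=
  ∀ b ∈ frontier R, AntipRel R v b (s b)

/-- The move type used at step `i` of an alternating sequence whose step `0` uses type `st`. -/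
def altMove (st : Bool) (i : ℕ) : Bool := if i % 2 = 0 then st else !st

/-- A trajectory: a finite sequence `b 0, …, b (l-1)` of distinct boundary points of `R`,
each obtained from the previous by an antipode map, the move types alternating. -/
def IsTrajectory (R : Set Pt) (mv : Bool → Pt) (l : ℕ) (b : ℕ → Pt) (st : Bool) : Prop :=
  1 ≤ l ∧ (∀ i, i < l → b i ∈ frontier R) ∧
  (∀ i j, i < l → j < l → b i = b j → i = j) ∧
  (∀ i, i + 1 < l → AntipRel R (mv (altMove st i)) (b i) (b (i + 1)))

/-- A cyclical trajectory: additionally the first point is the antipode of the last,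
the move type continuing the alternation. -/
def IsCyclical (R : Set Pt) (mv : Bool → Pt) (l : ℕ) (b : ℕ → Pt) (st : Bool) : Prop :=
  IsTrajectory R mv l b st ∧ AntipRel R (mv (altMove st (l - 1))) (b (l - 1)) (b 0)

/-- The configuration `(b 1, …, b l) ∈ B^l` formed by the points of a trajectory. -/
def trajConf (l : ℕ) (b : ℕ → Pt) : Conf l := fun i => b i

/-- A corner trajectory: a trajectory containing a corner of the board. -/
def IsCornerTraj (Bd : Board) (P : Piece) (l : ℕ) (b : ℕ → Pt) (st : Bool) : Prop :=
  IsTrajectory Bd.set P.mv l b st ∧ ∃ i, i < l ∧ b i ∈ Bd.corners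

/-- A rigid cycle: a cyclical trajectory of full rank. -/
def IsRigidCycle (Bd : Board) (P : Piece) (l : ℕ) (b : ℕ → Pt) (st : Bool) : Prop :=
  IsCyclical Bd.set P.mv l b st ∧ confRank Bd P (trajConf l b) = 2 * l

/-- The trajectory can be extended backwards (the relevant antipode of its first point
is a different point). -/
def CanExtendBack (R : Set Pt) (mv : Bool → Pt) (b : ℕ → Pt) (st : Bool) : Prop :=
  meetsInterior R (mv (altMove st 1)) (b 0)

/-- The trajectory can be extended forwards (the relevant antipode of its last point
is a different point). -/
def CanExtendFwd (R : Set Pt) (mv : Bool → Pt) (l : ℕ) (b : ℕ → Pt) (st : Bool) : Prop :=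
  meetsInterior R (mv (altMove st (l - 1))) (b (l - 1))

/-- `a 0, …, a (L-1)` is the augmentation of the trajectory `b 0, …, b (l-1)`:
the trajectory with the antipode of its first point prepended whenever it differs from the
first point, and the antipode of its last point appended whenever it differs from the
last point. -/
def IsAugmentation (R : Set Pt) (mv : Bool → Pt) (l : ℕ) (b : ℕ → Pt) (st : Bool)
    (L : ℕ) (a : ℕ → Pt) : Prop :=
  ∃ off : ℕ,
    (∀ i, i < l → a (i + off) = b i) ∧
    (CanExtendBack R mv b st → off = 1 ∧ AntipRel R (mv (altMove st 1)) (b 0) (a 0)) ∧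
    (¬ CanExtendBack R mv b st → off = 0) ∧
    (CanExtendFwd R mv l b st →
      L = l + off + 1 ∧ AntipRel R (mv (altMove st (l - 1))) (b (l - 1)) (a (l + off))) ∧
    (¬ CanExtendFwd R mv l b st → L = l + off)

/-- `c` is a crossing point of the two sequences: an interior point of `R` lying on a
segment of each. -/
def CrossingOfSeqs (R : Set Pt) (La : ℕ) (a : ℕ → Pt) (Lb : ℕ) (bb : ℕ → Pt) (c : Pt) : Prop :=
  c ∈ interior R ∧ ∃ i j, i + 1 < La ∧ j + 1 < Lb ∧
    c ∈ segment ℝ (a i) (a (i + 1)) ∧ c ∈ segment ℝ (bb j) (bb (j + 1))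

/-- `c` is a self-crossing point of the sequence: an interior point of `R` lying on two
distinct segments of the sequence. -/
def SelfCrossingOfSeq (R : Set Pt) (La : ℕ) (a : ℕ → Pt) (c : Pt) : Prop :=
  c ∈ interior R ∧ ∃ i j, i ≠ j ∧ i + 1 < La ∧ j + 1 < La ∧
    c ∈ segment ℝ (a i) (a (i + 1)) ∧ c ∈ segment ℝ (a j) (a (j + 1))

/-- `x` is a rational number whose denominator (in lowest terms) divides `D`. -/
def DenDvd (x : ℝ) (D : ℕ) : Prop := ∃ p : ℚ, (p : ℝ) = x ∧ p.den ∣ D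

/-- Both coordinates of `z` are rational with denominators dividing `D`. -/
def PtDenDvd (z : Pt) (D : ℕ) : Prop := DenDvd z.1 D ∧ DenDvd z.2 D

/-- `D` is the denominator of the inside-out polytope `(B^q, A_P^q)`: the least common
multiple of the denominators of the coordinates of all of its vertices. -/
def IsIOPDenom (Bd : Board) (P : Piece) (q : ℕ) (D : ℕ) : Prop :=
  (∀ z : Conf q, IsVertex Bd P z → ∀ i, PtDenDvd (z i) D) ∧
  (∀ D' : ℕ, (∀ z : Conf q, IsVertex Bd P z → ∀ i, PtDenDvd (z i) D') → D ∣ D')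

/-- A finite family of finite sequences of points (with starting move types),
to be used as a family of trajectories. -/
structure TrajFamily where
  m : ℕ
  len : ℕ → ℕ
  pts : ℕ → ℕ → Pt
  st : ℕ → Bool

/-- Every member of the family is a trajectory. -/
def TrajFamily.Wf (F : TrajFamily) (R : Set Pt) (mv : Bool → Pt) : Prop :=
  ∀ k, k < F.m → IsTrajectory R mv (F.len k) (F.pts k) (F.st k)

/-- The members of the family partition the set `S`: their point sets are pairwise disjoint
with union `S`. -/
def TrajFamily.Partitions (F : TrajFamily) (S : Set Pt) : Prop :=
  {p | ∃ k, k < F.m ∧ ∃ i, i < F.len k ∧ F.pts k i = p} = S ∧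
  ∀ k k', k < F.m → k' < F.m → k ≠ k' →
    ∀ i i', i < F.len k → i' < F.len k' → F.pts k i ≠ F.pts k' i'

/-- The family is a partition into maximal trajectories: no point of one member is an
antipode of a point of a different member (no edge of the antipode graph joins two
distinct members). -/
def TrajFamily.Maximal (F : TrajFamily) (R : Set Pt) (mv : Bool → Pt) : Prop :=
  ∀ k k', k < F.m → k' < F.m → k ≠ k' →
    ∀ i i', i < F.len k → i' < F.len k' →
      ∀ r : Bool, ¬ AntipRel R (mv r) (F.pts k i) (F.pts k' i')

/-- The unit square `[0,1]²`. -/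
def unitSq : Set Pt := Set.Icc ((0, 0) : Pt) ((1, 1) : Pt)

end

noncomputable section

lemma unitSq_eq : unitSq = Set.Icc (0:ℝ) 1 ×ˢ Set.Icc (0:ℝ) 1 := by
  rw [Set.Icc_prod_Icc]; rfl

lemma mem_unitSq {z : Pt} : z ∈ unitSq ↔ 0 ≤ z.1 ∧ z.1 ≤ 1 ∧ 0 ≤ z.2 ∧ z.2 ≤ 1 := by
  simp [unitSq, Set.mem_Icc, Prod.le_def]; tauto

lemma isClosed_unitSq : IsClosed unitSq := by
  rw [unitSq_eq]; exact isClosed_Icc.prod isClosed_Icc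

lemma mem_int_unitSq {z : Pt} :
    z ∈ interior unitSq ↔ 0 < z.1 ∧ z.1 < 1 ∧ 0 < z.2 ∧ z.2 < 1 := by
  rw [unitSq_eq, interior_prod_eq, interior_Icc]
  simp [Set.mem_prod, Set.mem_Ioo]
  tauto

lemma mem_frontier_unitSq {z : Pt} :
    z ∈ frontier unitSq ↔ (0 ≤ z.1 ∧ z.1 ≤ 1 ∧ 0 ≤ z.2 ∧ z.2 ≤ 1) ∧
      (z.1 = 0 ∨ z.1 = 1 ∨ z.2 = 0 ∨ z.2 = 1) := by
  rw [isClosed_unitSq.frontier_eq, Set.mem_diff, mem_unitSq, mem_int_unitSq]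
  constructor
  · rintro ⟨⟨a1, a2, a3, a4⟩, h⟩
    refine ⟨⟨a1, a2, a3, a4⟩, ?_⟩
    by_contra hc
    push_neg at hc
    exact h ⟨lt_of_le_of_ne a1 (Ne.symm hc.1), lt_of_le_of_ne a2 hc.2.1,
      lt_of_le_of_ne a3 (Ne.symm hc.2.2.1), lt_of_le_of_ne a4 hc.2.2.2⟩
  · rintro ⟨⟨a1, a2, a3, a4⟩, h⟩
    exact ⟨⟨a1, a2, a3, a4⟩, fun hi => by rcases h with h|h|h|h <;> rw [h] at hi <;>
      simp at hi <;> linarith [hi.1, hi.2.1, hi.2.2.1, hi.2.2.2]⟩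

lemma frontier_unitSq_subset : frontier unitSq ⊆ unitSq := by
  rw [isClosed_unitSq.frontier_eq]; exact Set.diff_subset

lemma frontier_unitSq_not_int {z : Pt} (h : z ∈ frontier unitSq) : z ∉ interior unitSq := by
  rw [isClosed_unitSq.frontier_eq] at h; exact h.2

lemma line_fst (b : Pt) (t m : ℝ) : (b + t • ((1:ℝ), m)).1 = b.1 + t := by
  simp

lemma line_snd (b : Pt) (t m : ℝ) : (b + t • ((1:ℝ), m)).2 = b.2 + t * m := by
  simp [mul_comm]

lemma strict_between {m : ℝ} (hm : m ≠ 0) {b : Pt} {t1 t2 t : ℝ}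
    (h1 : b + t1 • ((1:ℝ), m) ∈ unitSq) (h2 : b + t2 • ((1:ℝ), m) ∈ unitSq)
    (ha : t1 < t) (hb : t < t2) : b + t • ((1:ℝ), m) ∈ interior unitSq := by
  rw [mem_unitSq] at h1 h2
  rw [line_fst, line_snd] at h1 h2
  rw [mem_int_unitSq, line_fst, line_snd]
  rcases lt_or_gt_of_ne hm with hneg | hpos
  · have q1 : t2 * m < t * m := by nlinarith
    have q2 : t * m < t1 * m := by nlinarith
    refine ⟨by linarith, by linarith, by linarith, by linarith⟩
  · have q1 : t1 * m < t * m := by nlinarith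
    have q2 : t * m < t2 * m := by nlinarith
    refine ⟨by linarith, by linarith, by linarith, by linarith⟩

lemma antip_eq {m : ℝ} (hm : m ≠ 0) {s : Pt → Pt} (hs : IsAntipodeMap unitSq ((1:ℝ), m) s)
    {b b' : Pt} (hb : b ∈ frontier unitSq) (hb' : b' ∈ frontier unitSq)
    {t : ℝ} (ht : t ≠ 0) (hbt : b' = b + t • ((1:ℝ), m)) : s b = b' := by
  have hbu : b ∈ unitSq := frontier_unitSq_subset hb
  have hbu' : b + t • ((1:ℝ), m) ∈ unitSq := by rw [← hbt]; exact frontier_unitSq_subset hb'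
  have hb0 : b + (0:ℝ) • ((1:ℝ), m) ∈ unitSq := by simpa using hbu
  have hmeet : meetsInterior unitSq ((1:ℝ), m) b := by
    refine ⟨t / 2, ?_⟩
    rcases lt_or_gt_of_ne ht with h | h
    · exact strict_between hm hbu' hb0 (by linarith) (by linarith)
    · exact strict_between hm hb0 hbu' (by linarith) (by linarith)
  obtain ⟨hfr, hne, t', ht'⟩ := (hs b hb).2 hmeet
  have ht0' : t' ≠ 0 := by
    intro h; apply hne; rw [ht', h]; simp
  have key : t' = t := by
    by_contra hne2
    have h3 : b + t' • ((1:ℝ), m) ∈ unitSq := by rw [← ht']; exact frontier_unitSq_subset hfr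
    have hnotint : ∀ u : ℝ, b + u • ((1:ℝ), m) ∈ frontier unitSq →
        b + u • ((1:ℝ), m) ∉ interior unitSq := fun u hu => frontier_unitSq_not_int hu
    have hbf0 : b + (0:ℝ) • ((1:ℝ), m) ∈ frontier unitSq := by simpa using hb
    have hbft : b + t • ((1:ℝ), m) ∈ frontier unitSq := by rw [← hbt]; exact hb'
    have hbft' : b + t' • ((1:ℝ), m) ∈ frontier unitSq := by rw [← ht']; exact hfr
    -- one of 0, t, t' is strictly between the other two
    rcases lt_trichotomy t 0 with c1 | c1 | c1
    · rcases lt_trichotomy t' 0 with c2 | c2 | c2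
      · rcases lt_trichotomy t t' with c3 | c3 | c3
        · exact hnotint t' hbft' (strict_between hm hbu' hb0 c3 c2)
        · exact hne2 c3.symm
        · exact hnotint t hbft (strict_between hm h3 hb0 c3 c1)
      · exact ht0' c2
      · exact hnotint 0 hbf0 (strict_between hm hbu' h3 c1 c2)
    · exact absurd c1 ht
    · rcases lt_trichotomy t' 0 with c2 | c2 | c2
      · exact hnotint 0 hbf0 (strict_between hm h3 hbu' c2 c1)
      · exact ht0' c2
      · rcases lt_trichotomy t t' with c3 | c3 | c3
        · exact hnotint t hbft (strict_between hm hb0 h3 c1 c3)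
        · exact hne2 c3.symm
        · exact hnotint t' hbft' (strict_between hm hb0 hbu' c2 c3)
  rw [ht', key, ← hbt]

end

noncomputable section

def orbitO (m₁ m₂ : ℝ) : Set Pt :=
  {((m₁ - 1) / (m₁ + m₂), 0), (1, m₁ * (1 + m₂) / (m₁ + m₂)),
   ((1 + m₂) / (m₁ + m₂), 1), (0, m₂ * (1 - m₁) / (m₁ + m₂))}

structure ACtx where
  m₁ : ℝ
  m₂ : ℝ
  h₁ : 0 < m₁
  h₂ : m₁ < 1
  h₃ : m₂ < -1
  s₁ : Pt → Pt
  s₂ : Pt → Pt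
  hs₁ : IsAntipodeMap unitSq ((1:ℝ), m₁) s₁
  hs₂ : IsAntipodeMap unitSq ((1:ℝ), m₂) s₂

namespace ACtx

variable (C : ACtx)

lemma hm1 : C.m₁ ≠ 0 := ne_of_gt C.h₁
lemma hm2neg : C.m₂ < 0 := by have := C.h₃; linarith
lemma hm2 : C.m₂ ≠ 0 := ne_of_lt C.hm2neg
lemma hD : C.m₁ + C.m₂ < 0 := by have := C.h₂; have := C.h₃; linarith
lemma hDne : C.m₁ + C.m₂ ≠ 0 := ne_of_lt C.hD
lemma hinv2 : C.m₂ * (1 / C.m₂) = 1 := mul_one_div_cancel C.hm2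

lemma s1_eq {b b' : Pt} (hb : b ∈ frontier unitSq) (hb' : b' ∈ frontier unitSq)
    {t : ℝ} (ht : t ≠ 0) (hbt : b' = b + t • ((1:ℝ), C.m₁)) : C.s₁ b = b' :=
  antip_eq C.hm1 C.hs₁ hb hb' ht hbt

lemma s2_eq {b b' : Pt} (hb : b ∈ frontier unitSq) (hb' : b' ∈ frontier unitSq)
    {t : ℝ} (ht : t ≠ 0) (hbt : b' = b + t • ((1:ℝ), C.m₂)) : C.s₂ b = b' :=
  antip_eq C.hm2 C.hs₂ hb hb' ht hbt

lemma mem_fr {a b : ℝ} (h1 : 0 ≤ a) (h2 : a ≤ 1) (h3 : 0 ≤ b) (h4 : b ≤ 1)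
    (h5 : a = 0 ∨ a = 1 ∨ b = 0 ∨ b = 1) : ((a, b) : Pt) ∈ frontier unitSq :=
  mem_frontier_unitSq.2 ⟨⟨h1, h2, h3, h4⟩, h5⟩

lemma pt_eq {a b c d t m : ℝ} (h1 : c = a + t) (h2 : d = b + t * m) :
    ((c, d) : Pt) = ((a, b) : Pt) + t • ((1:ℝ), m) := by
  apply Prod.ext
  · rw [line_fst]; exact h1
  · rw [line_snd]; exact h2

/-! ### Formula lemmas for `s₁` -/

lemma s1_bottom {p : ℝ} (h0 : 0 ≤ p) (h1 : p < 1) :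
    C.s₁ (p, 0) = (1, C.m₁ * (1 - p)) := by
  have hA := C.h₁; have hB := C.h₂
  apply C.s1_eq (t := 1 - p)
  · exact mem_fr h0 (le_of_lt h1) le_rfl (by norm_num) (by norm_num)
  · exact mem_fr (by norm_num) (by norm_num) (by nlinarith) (by nlinarith) (by norm_num)
  · intro h; apply absurd h1; simp only [not_lt]; linarith [sub_eq_zero.1 h]
  · exact pt_eq (by ring) (by ring)

lemma s1_top {p : ℝ} (h0 : 0 < p) (h1 : p ≤ 1) :
    C.s₁ (p, 1) = (0, 1 - C.m₁ * p) := by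
  have hA := C.h₁; have hB := C.h₂
  apply C.s1_eq (t := -p)
  · exact mem_fr (le_of_lt h0) h1 (by norm_num) le_rfl (by norm_num)
  · exact mem_fr le_rfl (by norm_num) (by nlinarith) (by nlinarith) (by norm_num)
  · simpa using ne_of_gt h0
  · exact pt_eq (by ring) (by ring)

lemma s1_left_lo {y : ℝ} (h0 : 0 ≤ y) (h1 : y + C.m₁ ≤ 1) :
    C.s₁ (0, y) = (1, y + C.m₁) := by
  have hA := C.h₁; have hB := C.h₂
  apply C.s1_eq (t := 1)
  · exact mem_fr le_rfl (by norm_num) h0 (by linarith) (by norm_num)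
  · exact mem_fr (by norm_num) le_rfl (by linarith) h1 (by norm_num)
  · norm_num
  · exact pt_eq (by ring) (by ring)

lemma s1_left_hi {y : ℝ} (h0 : 1 ≤ y + C.m₁) (h1 : y < 1) :
    C.s₁ (0, y) = ((1 - y) / C.m₁, 1) := by
  have hA := C.h₁; have hB := C.h₂
  have hq0 : 0 < (1 - y) / C.m₁ := div_pos (by linarith) hA
  have hq1 : (1 - y) / C.m₁ ≤ 1 := by rw [div_le_one hA]; linarith
  apply C.s1_eq (t := (1 - y) / C.m₁)
  · exact mem_fr le_rfl (by norm_num) (by linarith) (le_of_lt h1) (by norm_num)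
  · exact mem_fr (le_of_lt hq0) hq1 (by norm_num) le_rfl (by norm_num)
  · exact ne_of_gt hq0
  · refine pt_eq (by ring) ?_
    have e1 := C.hm1; have e2 := C.hm2
    field_simp
    ring

lemma s1_right_hi {y : ℝ} (h0 : C.m₁ ≤ y) (h1 : y ≤ 1) :
    C.s₁ (1, y) = (0, y - C.m₁) := by
  have hA := C.h₁; have hB := C.h₂
  apply C.s1_eq (t := -1)
  · exact mem_fr (by norm_num) le_rfl (by linarith) h1 (by norm_num)
  · exact mem_fr le_rfl (by norm_num) (by linarith) (by linarith) (by norm_num)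
  · norm_num
  · exact pt_eq (by ring) (by ring)

lemma s1_right_lo {y : ℝ} (h0 : 0 < y) (h1 : y ≤ C.m₁) :
    C.s₁ (1, y) = (1 - y / C.m₁, 0) := by
  have hA := C.h₁; have hB := C.h₂
  have hq : 0 < y / C.m₁ := div_pos h0 hA
  have hq1 : y / C.m₁ ≤ 1 := by rw [div_le_one hA]; linarith
  apply C.s1_eq (t := -(y / C.m₁))
  · exact mem_fr (by norm_num) le_rfl (le_of_lt h0) (by linarith) (by norm_num)
  · exact mem_fr (by linarith) (by linarith) le_rfl (by norm_num) (by norm_num)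
  · simpa using ne_of_gt hq
  · refine pt_eq (by ring) ?_
    have e1 := C.hm1; have e2 := C.hm2
    field_simp
    ring

/-! ### Formula lemmas for `s₂` -/

lemma s2_right {y : ℝ} (h0 : 0 ≤ y) (h1 : y < 1) :
    C.s₂ (1, y) = (1 + (1 - y) / C.m₂, 1) := by
  have hA := C.h₃; have hm := C.hm2neg
  have hq : (1 - y) / C.m₂ < 0 := div_neg_of_pos_of_neg (by linarith) hm
  have hq1 : -1 < (1 - y) / C.m₂ := by
    rw [lt_div_iff_of_neg hm]; nlinarith
  apply C.s2_eq (t := (1 - y) / C.m₂)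
  · exact mem_fr (by norm_num) le_rfl h0 (le_of_lt h1) (by norm_num)
  · exact mem_fr (by linarith) (by linarith) (by norm_num) le_rfl (by norm_num)
  · exact ne_of_lt hq
  · refine pt_eq (by ring) ?_
    have e1 := C.hm1; have e2 := C.hm2
    field_simp
    ring

lemma s2_left {y : ℝ} (h0 : 0 < y) (h1 : y ≤ 1) :
    C.s₂ (0, y) = (-(y / C.m₂), 0) := by
  have hA := C.h₃; have hm := C.hm2neg
  have hq : y / C.m₂ < 0 := div_neg_of_pos_of_neg h0 hm
  have hq1 : -1 ≤ y / C.m₂ := by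
    rw [le_div_iff_of_neg hm]; nlinarith
  apply C.s2_eq (t := -(y / C.m₂))
  · exact mem_fr le_rfl (by norm_num) (le_of_lt h0) h1 (by norm_num)
  · exact mem_fr (by linarith) (by linarith) le_rfl (by norm_num) (by norm_num)
  · simpa using ne_of_lt hq
  · refine pt_eq (by ring) ?_
    have e1 := C.hm1; have e2 := C.hm2
    field_simp
    ring

lemma s2_bottom_lo {p : ℝ} (h0 : 0 < p) (h1 : -(C.m₂ * p) ≤ 1) :
    C.s₂ (p, 0) = (0, -(C.m₂ * p)) := by
  have hA := C.h₃; have hm := C.hm2neg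
  apply C.s2_eq (t := -p)
  · exact mem_fr (le_of_lt h0) (by nlinarith) le_rfl (by norm_num) (by norm_num)
  · exact mem_fr le_rfl (by norm_num) (by nlinarith) h1 (by norm_num)
  · simpa using ne_of_gt h0
  · exact pt_eq (by ring) (by ring)

lemma s2_bottom_hi {p : ℝ} (h0 : 1 ≤ -(C.m₂ * p)) (h1 : p ≤ 1) :
    C.s₂ (p, 0) = (p + 1 / C.m₂, 1) := by
  have hA := C.h₃; have hm := C.hm2neg; have hi := C.hinv2
  have hp0 : 0 < p := by nlinarith
  have hq0 : 0 ≤ p + 1 / C.m₂ := by nlinarith [mul_pos (neg_pos.2 hm) hp0]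
  have hq1 : p + 1 / C.m₂ < 1 := by nlinarith
  apply C.s2_eq (t := 1 / C.m₂)
  · exact mem_fr (le_of_lt hp0) h1 le_rfl (by norm_num) (by norm_num)
  · exact mem_fr hq0 (le_of_lt hq1) (by norm_num) le_rfl (by norm_num)
  · exact one_div_ne_zero C.hm2
  · refine pt_eq (by ring) ?_
    have e1 := C.hm1; have e2 := C.hm2
    field_simp
    ring
  
lemma s2_top_hi {x : ℝ} (h0 : 0 ≤ 1 + C.m₂ * (1 - x)) (h1 : x < 1) :
    C.s₂ (x, 1) = (1, 1 + C.m₂ * (1 - x)) := by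
  have hA := C.h₃; have hm := C.hm2neg
  have hx0 : 0 < x := by nlinarith
  apply C.s2_eq (t := 1 - x)
  · exact mem_fr (le_of_lt hx0) (le_of_lt h1) (by norm_num) le_rfl (by norm_num)
  · exact mem_fr (by norm_num) le_rfl h0 (by nlinarith) (by norm_num)
  · intro h; apply absurd h1; simp only [not_lt]; linarith [sub_eq_zero.1 h]
  · exact pt_eq (by ring) (by ring)

lemma s2_top_lo {x : ℝ} (h0 : 0 ≤ x) (h1 : 1 + C.m₂ * (1 - x) ≤ 0) :
    C.s₂ (x, 1) = (x - 1 / C.m₂, 0) := by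
  have hA := C.h₃; have hm := C.hm2neg; have hi := C.hinv2
  have hx1 : x < 1 := by nlinarith
  have hq0 : 0 < x - 1 / C.m₂ := by nlinarith [mul_pos (neg_pos.2 hm) (sub_pos.2 hx1)]
  have hq1 : x - 1 / C.m₂ ≤ 1 := by nlinarith
  apply C.s2_eq (t := -(1 / C.m₂))
  · exact mem_fr h0 (le_of_lt hx1) (by norm_num) le_rfl (by norm_num)
  · exact mem_fr (le_of_lt hq0) hq1 le_rfl (by norm_num) (by norm_num)
  · simpa using one_div_ne_zero C.hm2
  · refine pt_eq (by ring) ?_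
    have e1 := C.hm1; have e2 := C.hm2
    field_simp
    ring

/-! ### Stop lemmas at corners -/

lemma not_meets {m : ℝ} {b : Pt} (h : ∀ t : ℝ, b + t • ((1:ℝ), m) ∉ interior unitSq) :
    ¬ meetsInterior unitSq ((1:ℝ), m) b := by
  rintro ⟨t, ht⟩; exact h t ht

lemma stop_s1_corner10 : C.s₁ (1, 0) = (1, 0) := by
  have hA := C.h₁
  refine ((C.hs₁ (1,0) (mem_fr (by norm_num) le_rfl le_rfl (by norm_num) (by norm_num))).1
    (not_meets fun t ht => ?_))
  rw [mem_int_unitSq, line_fst, line_snd] at ht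
  obtain ⟨a1, a2, a3, a4⟩ := ht
  simp only at a1 a2 a3 a4
  nlinarith

lemma stop_s1_corner01 : C.s₁ (0, 1) = (0, 1) := by
  have hA := C.h₁
  refine ((C.hs₁ (0,1) (mem_fr le_rfl (by norm_num) (by norm_num) le_rfl (by norm_num))).1
    (not_meets fun t ht => ?_))
  rw [mem_int_unitSq, line_fst, line_snd] at ht
  obtain ⟨a1, a2, a3, a4⟩ := ht
  simp only at a1 a2 a3 a4
  nlinarith

lemma stop_s2_corner00 : C.s₂ (0, 0) = (0, 0) := by
  have hA := C.hm2neg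
  refine ((C.hs₂ (0,0) (mem_fr le_rfl (by norm_num) le_rfl (by norm_num) (by norm_num))).1
    (not_meets fun t ht => ?_))
  rw [mem_int_unitSq, line_fst, line_snd] at ht
  obtain ⟨a1, a2, a3, a4⟩ := ht
  simp only at a1 a2 a3 a4
  nlinarith

lemma stop_s2_corner11 : C.s₂ (1, 1) = (1, 1) := by
  have hA := C.hm2neg
  refine ((C.hs₂ (1,1) (mem_fr (by norm_num) le_rfl (by norm_num) le_rfl (by norm_num))).1
    (not_meets fun t ht => ?_))
  rw [mem_int_unitSq, line_fst, line_snd] at ht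
  obtain ⟨a1, a2, a3, a4⟩ := ht
  simp only at a1 a2 a3 a4
  nlinarith

/-! ### The orbit points -/

def o1 : Pt := ((C.m₁ - 1) / (C.m₁ + C.m₂), 0)
def o2 : Pt := (1, C.m₁ * (1 + C.m₂) / (C.m₁ + C.m₂))
def o3 : Pt := ((1 + C.m₂) / (C.m₁ + C.m₂), 1)
def o4 : Pt := (0, C.m₂ * (1 - C.m₁) / (C.m₁ + C.m₂))

lemma div_mem01 {a b : ℝ} (hb : b < 0) (h1 : b < a) (h2 : a < 0) : 0 < a / b ∧ a / b < 1 := by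
  have e : a / b = (-a) / (-b) := by rw [neg_div_neg_eq]
  rw [e]
  exact ⟨div_pos (by linarith) (by linarith), (div_lt_one (by linarith)).2 (by linarith)⟩

lemma o1x : 0 < (C.o1).1 ∧ (C.o1).1 < 1 := by
  have := C.h₁; have := C.h₂; have := C.h₃; have := C.hD
  exact div_mem01 C.hD (by linarith) (by linarith)

lemma o2y : 0 < (C.o2).2 ∧ (C.o2).2 < 1 := by
  have := C.h₁; have := C.h₂; have := C.h₃; have := C.hD
  exact div_mem01 C.hD (by nlinarith) (by nlinarith)

lemma o3x : 0 < (C.o3).1 ∧ (C.o3).1 < 1 := by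
  have := C.h₁; have := C.h₂; have := C.h₃; have := C.hD
  exact div_mem01 C.hD (by linarith) (by linarith)

lemma o4y : 0 < (C.o4).2 ∧ (C.o4).2 < 1 := by
  have := C.h₁; have := C.h₂; have := C.h₃; have := C.hD
  exact div_mem01 C.hD (by nlinarith) (by nlinarith)

lemma orbit_eq : orbitO C.m₁ C.m₂ = {C.o1, C.o2, C.o3, C.o4} := rfl

lemma o1_mem : C.o1 ∈ orbitO C.m₁ C.m₂ := by rw [C.orbit_eq]; simp
lemma o2_mem : C.o2 ∈ orbitO C.m₁ C.m₂ := by rw [C.orbit_eq]; simp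
lemma o3_mem : C.o3 ∈ orbitO C.m₁ C.m₂ := by rw [C.orbit_eq]; simp
lemma o4_mem : C.o4 ∈ orbitO C.m₁ C.m₂ := by rw [C.orbit_eq]; simp

/-! ### The orbit is periodic -/

lemma s1o1 : C.s₁ C.o1 = C.o2 := by
  obtain ⟨ha, hb⟩ := C.o1x
  have := C.hDne
  have h := C.s1_bottom (le_of_lt ha) hb
  rw [show ((C.o1).1, (0:ℝ)) = C.o1 from rfl] at h
  rw [h, o2]
  refine Prod.ext_iff.2 ⟨rfl, ?_⟩
  show C.m₁ * (1 - (C.m₁ - 1) / (C.m₁ + C.m₂)) = _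
  field_simp
  try ring
  try tauto

lemma s1o2 : C.s₁ C.o2 = C.o1 := by
  obtain ⟨ha, hb⟩ := C.o2y
  have := C.h₁; have := C.h₂; have := C.h₃; have := C.hD; have := C.hDne
  have hle : (C.o2).2 ≤ C.m₁ := by
    show C.m₁ * (1 + C.m₂) / (C.m₁ + C.m₂) ≤ C.m₁
    rw [div_le_iff_of_neg C.hD]; nlinarith
  have h := C.s1_right_lo ha hle
  rw [show ((1:ℝ), (C.o2).2) = C.o2 from rfl] at h
  rw [h, o1]
  refine Prod.ext_iff.2 ⟨?_, rfl⟩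
  show 1 - C.m₁ * (1 + C.m₂) / (C.m₁ + C.m₂) / C.m₁ = _
  field_simp
  try ring
  try tauto

lemma s1o3 : C.s₁ C.o3 = C.o4 := by
  obtain ⟨ha, hb⟩ := C.o3x
  have := C.hDne
  have h := C.s1_top ha (le_of_lt hb)
  rw [show ((C.o3).1, (1:ℝ)) = C.o3 from rfl] at h
  rw [h, o4]
  refine Prod.ext_iff.2 ⟨rfl, ?_⟩
  show 1 - C.m₁ * ((1 + C.m₂) / (C.m₁ + C.m₂)) = _
  field_simp
  try ring
  try tauto

lemma s1o4 : C.s₁ C.o4 = C.o3 := by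
  obtain ⟨ha, hb⟩ := C.o4y
  have := C.h₁; have := C.h₂; have := C.h₃; have := C.hD; have := C.hDne
  have hDne' : -(C.m₁ + C.m₂) ≠ 0 := by intro h; apply C.hDne; linarith [neg_eq_zero.1 h]
  have hge : 1 ≤ (C.o4).2 + C.m₁ := by
    rw [← sub_nonneg]
    have e : (C.o4).2 + C.m₁ - 1 = (-(C.m₁ * (1 - C.m₁))) / (C.m₁ + C.m₂) := by
      show C.m₂ * (1 - C.m₁) / (C.m₁ + C.m₂) + C.m₁ - 1 = _
      field_simp
      ring
    rw [e]
    exact le_of_lt (div_pos_iff.2 (Or.inr ⟨by nlinarith, C.hD⟩))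
  have h := C.s1_left_hi hge hb
  rw [show ((0:ℝ), (C.o4).2) = C.o4 from rfl] at h
  rw [h, o3]
  refine Prod.ext_iff.2 ⟨?_, rfl⟩
  show (1 - C.m₂ * (1 - C.m₁) / (C.m₁ + C.m₂)) / C.m₁ = _
  field_simp
  try ring
  try tauto

lemma s2o2 : C.s₂ C.o2 = C.o3 := by
  obtain ⟨ha, hb⟩ := C.o2y
  have := C.hDne; have := C.hm2
  have h := C.s2_right (le_of_lt ha) hb
  rw [show ((1:ℝ), (C.o2).2) = C.o2 from rfl] at h
  rw [h, o3]
  refine Prod.ext_iff.2 ⟨?_, rfl⟩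
  show 1 + (1 - C.m₁ * (1 + C.m₂) / (C.m₁ + C.m₂)) / C.m₂ = _
  field_simp
  try ring
  try tauto

lemma s2o3 : C.s₂ C.o3 = C.o2 := by
  obtain ⟨ha, hb⟩ := C.o3x
  have := C.h₁; have := C.h₂; have := C.h₃; have := C.hD; have := C.hDne
  have e : 1 + C.m₂ * (1 - (C.o3).1) = C.m₁ * (1 + C.m₂) / (C.m₁ + C.m₂) := by
    show 1 + C.m₂ * (1 - (1 + C.m₂) / (C.m₁ + C.m₂)) = _
    field_simp
    ring
  have hge : 0 ≤ 1 + C.m₂ * (1 - (C.o3).1) := by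
    rw [e]; exact le_of_lt (C.o2y).1
  have h := C.s2_top_hi hge hb
  rw [show ((C.o3).1, (1:ℝ)) = C.o3 from rfl] at h
  rw [h, e, o2]

lemma s2o4 : C.s₂ C.o4 = C.o1 := by
  obtain ⟨ha, hb⟩ := C.o4y
  have := C.hDne; have := C.hm2
  have h := C.s2_left ha (le_of_lt hb)
  rw [show ((0:ℝ), (C.o4).2) = C.o4 from rfl] at h
  rw [h, o1]
  refine Prod.ext_iff.2 ⟨?_, rfl⟩
  show -(C.m₂ * (1 - C.m₁) / (C.m₁ + C.m₂) / C.m₂) = _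
  field_simp
  try ring
  try tauto

lemma s2o1 : C.s₂ C.o1 = C.o4 := by
  obtain ⟨ha, hb⟩ := C.o1x
  have := C.h₁; have := C.h₂; have := C.h₃; have := C.hD; have := C.hDne
  have e : -(C.m₂ * (C.o1).1) = C.m₂ * (1 - C.m₁) / (C.m₁ + C.m₂) := by
    show -(C.m₂ * ((C.m₁ - 1) / (C.m₁ + C.m₂))) = _
    field_simp
    ring
  have hle : -(C.m₂ * (C.o1).1) ≤ 1 := by
    rw [e]; exact le_of_lt (C.o4y).2
  have h := C.s2_bottom_lo ha hle
  rw [show (((C.o1).1, (0:ℝ)) : Pt) = C.o1 from rfl] at h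
  rw [h, e, o4]

end ACtx


lemma altMove_succ (st : Bool) (n : ℕ) : altMove st (n + 1) = !(altMove st n) := by
  unfold altMove
  rcases Nat.mod_two_eq_zero_or_one n with h | h <;>
    simp [h, Nat.add_mod] <;> cases st <;> simp

structure SeqCtx extends ACtx where
  x : ℕ → Pt
  st : Bool
  hx0 : x 0 ∈ frontier unitSq
  hstep : ∀ n, x (n + 1) = (if altMove st n then s₂ else s₁) (x n)
  hne : ∀ n, x (n + 1) ≠ x n

namespace SeqCtx

variable (S : SeqCtx)

lemma step_s1 {n : ℕ} (h : altMove S.st n = false) : S.x (n + 1) = S.s₁ (S.x n) := by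
  rw [S.hstep n, h]; simp

lemma step_s2 {n : ℕ} (h : altMove S.st n = true) : S.x (n + 1) = S.s₂ (S.x n) := by
  rw [S.hstep n, h]; simp

lemma front : ∀ n, S.x n ∈ frontier unitSq := by
  intro n
  induction n with
  | zero => exact S.hx0
  | succ n hf =>
    cases hA : altMove S.st n with
    | false =>
      have rel := S.hs₁ (S.x n) hf
      by_cases hm : meetsInterior unitSq ((1:ℝ), S.m₁) (S.x n)
      · rw [S.step_s1 hA]; exact (rel.2 hm).1
      · exact absurd ((S.step_s1 hA).trans (rel.1 hm)) (S.hne n)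
    | true =>
      have rel := S.hs₂ (S.x n) hf
      by_cases hm : meetsInterior unitSq ((1:ℝ), S.m₂) (S.x n)
      · rw [S.step_s2 hA]; exact (rel.2 hm).1
      · exact absurd ((S.step_s2 hA).trans (rel.1 hm)) (S.hne n)

lemma no_stop1 {n : ℕ} {c : Pt} (hA : altMove S.st n = false) (h : S.x n = c)
    (hs : S.s₁ c = c) : False :=
  S.hne n (by rw [S.step_s1 hA, h]; exact hs)

lemma no_stop2 {n : ℕ} {c : Pt} (hA : altMove S.st n = true) (h : S.x n = c)
    (hs : S.s₂ c = c) : False :=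
  S.hne n (by rw [S.step_s2 hA, h]; exact hs)

/-! ### States -/

def GB (n : ℕ) : Prop := altMove S.st n = false ∧ ∃ p, S.x n = (p, 0) ∧ 0 ≤ p ∧ p < 1
def G1 (n : ℕ) : Prop := altMove S.st n = true ∧ ∃ y, S.x n = (1, y) ∧ 0 < y ∧ y < 1
def G2 (n : ℕ) : Prop := altMove S.st n = false ∧ ∃ p, S.x n = (p, 1) ∧ 0 < p ∧ p ≤ 1
def G3 (n : ℕ) : Prop := altMove S.st n = true ∧ ∃ y, S.x n = (0, y) ∧ 0 < y ∧ y < 1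
def BB (n : ℕ) : Prop := altMove S.st n = true ∧ ∃ p, S.x n = (p, 0) ∧ 0 < p ∧ p ≤ 1
def B1 (n : ℕ) : Prop := altMove S.st n = false ∧ ∃ y, S.x n = (0, y) ∧ 0 < y ∧ y < 1
def B2 (n : ℕ) : Prop := altMove S.st n = true ∧ ∃ p, S.x n = (p, 1) ∧ 0 ≤ p ∧ p < 1
def B3 (n : ℕ) : Prop := altMove S.st n = false ∧ ∃ y, S.x n = (1, y) ∧ 0 < y ∧ y < 1

lemma cover (n : ℕ) :
    S.GB n ∨ S.G1 n ∨ S.G2 n ∨ S.G3 n ∨ S.BB n ∨ S.B1 n ∨ S.B2 n ∨ S.B3 n := by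
  have hf := S.front n
  rw [mem_frontier_unitSq] at hf
  obtain ⟨⟨a1, a2, a3, a4⟩, hc⟩ := hf
  have hxeta : S.x n = ((S.x n).1, (S.x n).2) := rfl
  cases hA : altMove S.st n with
  | false =>
    rcases hc with h | h | h | h
    · -- left edge
      rcases eq_or_lt_of_le a3 with h2 | h2
      · -- (0,0) : GB with p = 0
        exact Or.inl ⟨hA, 0, by rw [hxeta, h, ← h2], le_rfl, one_pos⟩
      rcases eq_or_lt_of_le a4 with h2' | h2'
      · -- (0,1) : stop
        exact absurd (S.no_stop1 hA (by rw [hxeta, h, h2']) S.stop_s1_corner01) not_false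
      · exact Or.inr (Or.inr (Or.inr (Or.inr (Or.inr (Or.inl
          ⟨hA, (S.x n).2, by rw [hxeta, h], h2, h2'⟩)))))
    · -- right edge
      rcases eq_or_lt_of_le a3 with h2 | h2
      · -- (1,0) : stop
        exact absurd (S.no_stop1 hA (by rw [hxeta, h, ← h2]) S.stop_s1_corner10) not_false
      rcases eq_or_lt_of_le a4 with h2' | h2'
      · -- (1,1) : G2 with p = 1
        exact Or.inr (Or.inr (Or.inl ⟨hA, 1, by rw [hxeta, h, h2'], one_pos, le_rfl⟩))
      · exact Or.inr (Or.inr (Or.inr (Or.inr (Or.inr (Or.inr (Or.inr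
          ⟨hA, (S.x n).2, by rw [hxeta, h], h2, h2'⟩))))))
    · -- bottom edge
      rcases eq_or_lt_of_le a2 with h2 | h2
      · -- (1,0) : stop
        exact absurd (S.no_stop1 hA (by rw [hxeta, h, h2]) S.stop_s1_corner10) not_false
      · exact Or.inl ⟨hA, (S.x n).1, by rw [hxeta, h], a1, h2⟩
    · -- top edge
      rcases eq_or_lt_of_le a1 with h2 | h2
      · -- (0,1) : stop
        exact absurd (S.no_stop1 hA (by rw [hxeta, h, ← h2]) S.stop_s1_corner01) not_false
      · exact Or.inr (Or.inr (Or.inl ⟨hA, (S.x n).1, by rw [hxeta, h], h2, a2⟩))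
  | true =>
    rcases hc with h | h | h | h
    · -- left edge
      rcases eq_or_lt_of_le a3 with h2 | h2
      · -- (0,0) : stop
        exact absurd (S.no_stop2 hA (by rw [hxeta, h, ← h2]) S.stop_s2_corner00) not_false
      rcases eq_or_lt_of_le a4 with h2' | h2'
      · -- (0,1) : B2 with p = 0
        exact Or.inr (Or.inr (Or.inr (Or.inr (Or.inr (Or.inr (Or.inl
          ⟨hA, 0, by rw [hxeta, h, h2'], le_rfl, one_pos⟩))))))
      · exact Or.inr (Or.inr (Or.inr (Or.inl ⟨hA, (S.x n).2, by rw [hxeta, h], h2, h2'⟩)))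
    · -- right edge
      rcases eq_or_lt_of_le a4 with h2' | h2'
      · -- (1,1) : stop
        exact absurd (S.no_stop2 hA (by rw [hxeta, h, h2']) S.stop_s2_corner11) not_false
      rcases eq_or_lt_of_le a3 with h2 | h2
      · -- (1,0) : BB with p = 1
        exact Or.inr (Or.inr (Or.inr (Or.inr (Or.inl
          ⟨hA, 1, by rw [hxeta, h, ← h2], one_pos, le_rfl⟩))))
      · exact Or.inr (Or.inl ⟨hA, (S.x n).2, by rw [hxeta, h], h2, h2'⟩)
    · -- bottom edge
      rcases eq_or_lt_of_le a1 with h2 | h2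
      · -- (0,0) : stop
        exact absurd (S.no_stop2 hA (by rw [hxeta, h, ← h2]) S.stop_s2_corner00) not_false
      · exact Or.inr (Or.inr (Or.inr (Or.inr (Or.inl
          ⟨hA, (S.x n).1, by rw [hxeta, h], h2, a2⟩))))
    · -- top edge
      rcases eq_or_lt_of_le a2 with h2 | h2
      · -- (1,1) : stop
        exact absurd (S.no_stop2 hA (by rw [hxeta, h, h2]) S.stop_s2_corner11) not_false
      · exact Or.inr (Or.inr (Or.inr (Or.inr (Or.inr (Or.inr (Or.inl
          ⟨hA, (S.x n).1, by rw [hxeta, h], a1, h2⟩))))))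

/-! ### Good chains -/

lemma g3_to_gb {n : ℕ} (h : S.G3 n) : S.GB (n + 1) := by
  obtain ⟨hA, y, hx, h0, h1⟩ := h
  have hm := S.hm2neg
  have hx' : S.x (n + 1) = (-(y / S.m₂), 0) := by
    rw [S.step_s2 hA, hx, S.s2_left h0 (le_of_lt h1)]
  refine ⟨by rw [altMove_succ, hA]; rfl, -(y / S.m₂), hx', ?_, ?_⟩
  · have : y / S.m₂ ≤ 0 := le_of_lt (div_neg_of_pos_of_neg h0 hm)
    linarith
  · rw [← div_neg]
    exact (div_lt_one (by linarith [S.h₃])).2 (by linarith [S.h₃])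

lemma g2_to_gb {n : ℕ} (h : S.G2 n) : S.GB (n + 2) := by
  obtain ⟨hA, p, hx, h0, h1⟩ := h
  have hm1 := S.h₁; have hm2 := S.h₂
  have hx' : S.x (n + 1) = (0, 1 - S.m₁ * p) := by
    rw [S.step_s1 hA, hx, S.s1_top h0 h1]
  exact S.g3_to_gb ⟨by rw [altMove_succ, hA]; rfl, 1 - S.m₁ * p, hx',
    by nlinarith, by nlinarith⟩

lemma g1_to_gb {n : ℕ} (h : S.G1 n) : S.GB (n + 3) := by
  obtain ⟨hA, y, hx, h0, h1⟩ := h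
  have hm := S.hm2neg; have h3 := S.h₃
  have hx' : S.x (n + 1) = (1 + (1 - y) / S.m₂, 1) := by
    rw [S.step_s2 hA, hx, S.s2_right (le_of_lt h0) h1]
  have hq : -1 < (1 - y) / S.m₂ := by rw [lt_div_iff_of_neg hm]; nlinarith
  have hq' : (1 - y) / S.m₂ < 0 := div_neg_of_pos_of_neg (by linarith) hm
  exact S.g2_to_gb ⟨by rw [altMove_succ, hA]; rfl, 1 + (1 - y) / S.m₂, hx',
    by linarith, by linarith⟩

/-! ### Bad chains -/

lemma b1_step {n : ℕ} (h : S.B1 n) : (∃ m, S.GB m) ∨ S.B2 (n + 1) := by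
  obtain ⟨hA, y, hx, h0, h1⟩ := h
  have hm1' := S.h₁; have hm2' := S.h₂
  rcases le_or_gt (y + S.m₁) 1 with hc | hc
  · have hx' : S.x (n+1) = (1, y + S.m₁) := by
      rw [S.step_s1 hA, hx, S.s1_left_lo (le_of_lt h0) hc]
    have hA1 : altMove S.st (n+1) = true := by rw [altMove_succ, hA]; rfl
    rcases eq_or_lt_of_le hc with he | he
    · exact absurd (S.no_stop2 hA1 (by rw [hx', he]) S.stop_s2_corner11) not_false
    · exact Or.inl ⟨(n+1)+3, S.g1_to_gb ⟨hA1, _, hx', by linarith, he⟩⟩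
  · have hx' : S.x (n+1) = ((1 - y)/S.m₁, 1) := by
      rw [S.step_s1 hA, hx, S.s1_left_hi (le_of_lt hc) h1]
    refine Or.inr ⟨by rw [altMove_succ, hA]; rfl, _, hx',
      le_of_lt (div_pos (by linarith) hm1'), ?_⟩
    rw [div_lt_one hm1']; linarith

lemma b2_step {n : ℕ} (h : S.B2 n) : (∃ m, S.GB m) ∨ S.B3 (n + 1) := by
  obtain ⟨hA, p, hx, h0, h1⟩ := h
  have hm := S.hm2neg; have h3 := S.h₃
  rcases le_or_gt 0 (1 + S.m₂ * (1 - p)) with hc | hc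
  · have hx' : S.x (n+1) = (1, 1 + S.m₂ * (1 - p)) := by
      rw [S.step_s2 hA, hx, S.s2_top_hi hc h1]
    have hA1 : altMove S.st (n+1) = false := by rw [altMove_succ, hA]; rfl
    rcases eq_or_lt_of_le hc with he | he
    · exact absurd (S.no_stop1 hA1 (by rw [hx', ← he]) S.stop_s1_corner10) not_false
    · have hlt : 1 + S.m₂ * (1 - p) < 1 := by
        have := mul_neg_of_neg_of_pos hm (sub_pos.2 h1); linarith
      exact Or.inr ⟨hA1, _, hx', he, hlt⟩
  · have hx' : S.x (n+1) = (p - 1/S.m₂, 0) := by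
      rw [S.step_s2 hA, hx, S.s2_top_lo h0 (le_of_lt hc)]
    have hneg : 1/S.m₂ < 0 := one_div_neg.2 hm
    have e : p - 1/S.m₂ - 1 = (1 + S.m₂ * (1 - p)) * (-(1/S.m₂)) := by
      have := S.hm2; field_simp; ring
    have hlt : p - 1/S.m₂ < 1 := by
      have := mul_neg_of_neg_of_pos hc (by linarith : (0:ℝ) < -(1/S.m₂)); linarith
    exact Or.inl ⟨n+1, by rw [altMove_succ, hA]; rfl, _, hx', by linarith, hlt⟩

lemma b3_step {n : ℕ} (h : S.B3 n) : (∃ m, S.GB m) ∨ S.BB (n + 1) := by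
  obtain ⟨hA, y, hx, h0, h1⟩ := h
  have hm1' := S.h₁; have hm2' := S.h₂
  rcases lt_trichotomy y S.m₁ with hc | hc | hc
  · have hx' : S.x (n+1) = (1 - y/S.m₁, 0) := by
      rw [S.step_s1 hA, hx, S.s1_right_lo h0 (le_of_lt hc)]
    have ha : y / S.m₁ < 1 := (div_lt_one hm1').2 hc
    have hb : 0 < y / S.m₁ := div_pos h0 hm1'
    exact Or.inr ⟨by rw [altMove_succ, hA]; rfl, _, hx', by linarith, by linarith⟩
  · have hx' : S.x (n+1) = (1 - y/S.m₁, 0) := by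
      rw [S.step_s1 hA, hx, S.s1_right_lo h0 (le_of_eq hc)]
    have hA1 : altMove S.st (n+1) = true := by rw [altMove_succ, hA]; rfl
    have hz : S.x (n+1) = ((0:ℝ), (0:ℝ)) := by
      rw [hx', hc, div_self (ne_of_gt hm1')]; norm_num
    exact absurd (S.no_stop2 hA1 hz S.stop_s2_corner00) not_false
  · have hx' : S.x (n+1) = (0, y - S.m₁) := by
      rw [S.step_s1 hA, hx, S.s1_right_hi (le_of_lt hc) (le_of_lt h1)]
    have hA1 : altMove S.st (n+1) = true := by rw [altMove_succ, hA]; rfl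
    exact Or.inl ⟨(n+1)+1, S.g3_to_gb ⟨hA1, _, hx', by linarith, by linarith⟩⟩

lemma init : (∃ n, S.GB n) ∨ (∃ n, S.BB n) := by
  rcases S.cover 0 with h | h | h | h | h | h | h | h
  · exact Or.inl ⟨0, h⟩
  · exact Or.inl ⟨0+3, S.g1_to_gb h⟩
  · exact Or.inl ⟨0+2, S.g2_to_gb h⟩
  · exact Or.inl ⟨0+1, S.g3_to_gb h⟩
  · exact Or.inr ⟨0, h⟩
  · rcases S.b1_step h with hg | h2
    · exact Or.inl hg
    rcases S.b2_step h2 with hg | h3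
    · exact Or.inl hg
    rcases S.b3_step h3 with hg | h4
    · exact Or.inl hg
    · exact Or.inr ⟨0+1+1+1, h4⟩
  · rcases S.b2_step h with hg | h3
    · exact Or.inl hg
    rcases S.b3_step h3 with hg | h4
    · exact Or.inl hg
    · exact Or.inr ⟨0+1+1, h4⟩
  · rcases S.b3_step h with hg | h4
    · exact Or.inl hg
    · exact Or.inr ⟨0+1, h4⟩

/-! ### Distance helpers -/

lemma dist_snd_pt {a b c : ℝ} : dist (((a, b)) : Pt) ((a, c) : Pt) = |b - c| := by
  rw [Prod.dist_eq]
  simp [Real.dist_eq]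

lemma dist_fst_pt {a b c : ℝ} : dist (((a, c)) : Pt) ((b, c) : Pt) = |a - b| := by
  rw [Prod.dist_eq]
  simp [Real.dist_eq]

/-! ### The contracting good cycle -/

lemma good_cycle {n : ℕ} {p : ℝ} (hA : altMove S.st n = false) (hx : S.x n = (p, 0))
    (h0 : 0 ≤ p) (h1 : p < 1) :
    ∃ q, altMove S.st (n+4) = false ∧ S.x (n+4) = (q, 0) ∧ 0 ≤ q ∧ q < 1 ∧
      q - (S.m₁ - 1)/(S.m₁ + S.m₂) = (S.m₁/S.m₂)^2 * (p - (S.m₁ - 1)/(S.m₁ + S.m₂)) ∧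
      ∀ j, j ≤ 3 → Metric.infDist (S.x (n+j)) (orbitO S.m₁ S.m₂) ≤
        |p - (S.m₁ - 1)/(S.m₁ + S.m₂)| := by
  have hm1' := S.h₁; have hm2' := S.h₂; have h3 := S.h₃; have hm := S.hm2neg
  have hD := S.hD; have hDne := S.hDne; have hm2 := S.hm2
  -- step 1 : bottom → right
  have hy1a : 0 < S.m₁ * (1 - p) := by nlinarith
  have hy1b : S.m₁ * (1 - p) < 1 := by nlinarith
  have hx1 : S.x (n+1) = (1, S.m₁ * (1 - p)) := by
    rw [S.step_s1 hA, hx, S.s1_bottom h0 h1]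
  have hA1 : altMove S.st (n+1) = true := by rw [altMove_succ, hA]; rfl
  -- step 2 : right → top
  have hp2a : 0 < 1 + (1 - S.m₁ * (1 - p)) / S.m₂ := by
    have : -1 < (1 - S.m₁ * (1 - p)) / S.m₂ := by rw [lt_div_iff_of_neg hm]; nlinarith
    linarith
  have hp2b : 1 + (1 - S.m₁ * (1 - p)) / S.m₂ < 1 := by
    have : (1 - S.m₁ * (1 - p)) / S.m₂ < 0 := div_neg_of_pos_of_neg (by linarith) hm
    linarith
  have hx2 : S.x (n+2) = (1 + (1 - S.m₁ * (1 - p)) / S.m₂, 1) := by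
    rw [S.step_s2 hA1, hx1, S.s2_right (le_of_lt hy1a) hy1b]
  have hA2 : altMove S.st (n+2) = false := by rw [altMove_succ, hA1]; rfl
  -- step 3 : top → left
  have hy3a : 0 < 1 - S.m₁ * (1 + (1 - S.m₁ * (1 - p)) / S.m₂) := by nlinarith
  have hy3b : 1 - S.m₁ * (1 + (1 - S.m₁ * (1 - p)) / S.m₂) < 1 := by nlinarith
  have hx3 : S.x (n+3) = (0, 1 - S.m₁ * (1 + (1 - S.m₁ * (1 - p)) / S.m₂)) := by
    rw [S.step_s1 hA2, hx2, S.s1_top hp2a (le_of_lt hp2b)]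
  have hA3 : altMove S.st (n+3) = true := by rw [altMove_succ, hA2]; rfl
  -- step 4 : left → bottom
  have hx4 : S.x (n+4) =
      (-((1 - S.m₁ * (1 + (1 - S.m₁ * (1 - p)) / S.m₂)) / S.m₂), 0) := by
    rw [S.step_s2 hA3, hx3, S.s2_left hy3a (le_of_lt hy3b)]
  have hA4 : altMove S.st (n+4) = false := by rw [altMove_succ, hA3]; rfl
  have hq0 : 0 ≤ -((1 - S.m₁ * (1 + (1 - S.m₁ * (1 - p)) / S.m₂)) / S.m₂) := by
    have := div_neg_of_pos_of_neg hy3a hm; linarith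
  have hq1 : -((1 - S.m₁ * (1 + (1 - S.m₁ * (1 - p)) / S.m₂)) / S.m₂) < 1 := by
    rw [← div_neg]
    exact (div_lt_one (by linarith)).2 (by linarith)
  refine ⟨_, hA4, hx4, hq0, hq1, by field_simp; ring, ?_⟩
  -- distance bounds
  have hE0 : Metric.infDist (S.x n) (orbitO S.m₁ S.m₂) ≤ |p - (S.m₁-1)/(S.m₁+S.m₂)| := by
    refine le_trans (Metric.infDist_le_dist_of_mem S.toACtx.o1_mem) ?_
    rw [hx, ACtx.o1, dist_fst_pt]
  have hE1 : Metric.infDist (S.x (n+1)) (orbitO S.m₁ S.m₂) ≤ |p - (S.m₁-1)/(S.m₁+S.m₂)| := by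
    refine le_trans (Metric.infDist_le_dist_of_mem S.toACtx.o2_mem) ?_
    rw [hx1, ACtx.o2, dist_snd_pt]
    have e : S.m₁ * (1 - p) - S.m₁ * (1 + S.m₂) / (S.m₁ + S.m₂) =
        (-S.m₁) * (p - (S.m₁-1)/(S.m₁+S.m₂)) := by field_simp; ring
    rw [e, abs_mul]
    exact mul_le_of_le_one_left (abs_nonneg _) (by rw [abs_neg, abs_of_pos hm1']; linarith)
  have hE2 : Metric.infDist (S.x (n+2)) (orbitO S.m₁ S.m₂) ≤ |p - (S.m₁-1)/(S.m₁+S.m₂)| := by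
    refine le_trans (Metric.infDist_le_dist_of_mem S.toACtx.o3_mem) ?_
    rw [hx2, ACtx.o3, dist_fst_pt]
    have e : 1 + (1 - S.m₁ * (1 - p)) / S.m₂ - (1 + S.m₂) / (S.m₁ + S.m₂) =
        (S.m₁/S.m₂) * (p - (S.m₁-1)/(S.m₁+S.m₂)) := by field_simp; ring
    rw [e, abs_mul]
    refine mul_le_of_le_one_left (abs_nonneg _) ?_
    rw [abs_div, abs_of_pos hm1', abs_of_neg hm, div_le_one (by linarith)]
    linarith
  have hE3 : Metric.infDist (S.x (n+3)) (orbitO S.m₁ S.m₂) ≤ |p - (S.m₁-1)/(S.m₁+S.m₂)| := by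
    refine le_trans (Metric.infDist_le_dist_of_mem S.toACtx.o4_mem) ?_
    rw [hx3, ACtx.o4, dist_snd_pt]
    have e : 1 - S.m₁ * (1 + (1 - S.m₁ * (1 - p)) / S.m₂) - S.m₂ * (1 - S.m₁) / (S.m₁ + S.m₂) =
        (-(S.m₁^2)/S.m₂) * (p - (S.m₁-1)/(S.m₁+S.m₂)) := by field_simp; ring
    rw [e, abs_mul]
    refine mul_le_of_le_one_left (abs_nonneg _) ?_
    rw [abs_div, abs_neg, abs_of_pos (pow_pos hm1' 2), abs_of_neg hm,
      div_le_one (by linarith)]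
    nlinarith
  intro j hj
  interval_cases j
  · exact hE0
  · exact hE1
  · exact hE2
  · exact hE3

/-! ### The expanding bad cycle -/

lemma bb_cycle {n : ℕ} {p : ℝ} (hA : altMove S.st n = true) (hx : S.x n = (p, 0))
    (h0 : 0 < p) (h1 : p ≤ 1) :
    (∃ m, S.GB m) ∨ (∃ q, altMove S.st (n+4) = true ∧ S.x (n+4) = (q, 0) ∧ 0 < q ∧ q ≤ 1 ∧
      q - (S.m₁ - 1)/(S.m₁ + S.m₂) = (S.m₂/S.m₁)^2 * (p - (S.m₁ - 1)/(S.m₁ + S.m₂))) := by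
  have hm1' := S.h₁; have hm2' := S.h₂; have h3 := S.h₃; have hm := S.hm2neg
  have hD := S.hD; have hDne := S.hDne; have hm2 := S.hm2
  have hneg : 1/S.m₂ < 0 := one_div_neg.2 hm
  -- step 1
  rcases lt_or_ge 1 (-(S.m₂ * p)) with hc1 | hc1
  · -- exits to G2 at n+1
    have hx1 : S.x (n+1) = (p + 1/S.m₂, 1) := by
      rw [S.step_s2 hA, hx, S.s2_bottom_hi (le_of_lt hc1) h1]
    have e : p + 1/S.m₂ = (-(S.m₂*p) - 1) * (-(1/S.m₂)) := by field_simp; ring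
    have hq0 : 0 < p + 1/S.m₂ := by
      rw [e]; exact mul_pos (by linarith) (by linarith)
    exact Or.inl ⟨(n+1)+2, S.g2_to_gb ⟨by rw [altMove_succ, hA]; rfl, _, hx1, hq0,
      by linarith⟩⟩
  have hx1 : S.x (n+1) = (0, -(S.m₂ * p)) := by
    rw [S.step_s2 hA, hx, S.s2_bottom_lo h0 hc1]
  have hA1 : altMove S.st (n+1) = false := by rw [altMove_succ, hA]; rfl
  have hy1a : 0 < -(S.m₂ * p) := by nlinarith
  rcases eq_or_lt_of_le hc1 with he | hy1b
  · exact absurd (S.no_stop1 hA1 (by rw [hx1, he]) S.stop_s1_corner01) not_false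
  -- step 2
  rcases le_or_gt (-(S.m₂*p) + S.m₁) 1 with hc2 | hc2
  · have hx2 : S.x (n+2) = (1, -(S.m₂*p) + S.m₁) := by
      rw [S.step_s1 hA1, hx1, S.s1_left_lo (le_of_lt hy1a) hc2]
    have hA2 : altMove S.st (n+2) = true := by rw [altMove_succ, hA1]; rfl
    rcases eq_or_lt_of_le hc2 with he | he
    · exact absurd (S.no_stop2 hA2 (by rw [hx2, he]) S.stop_s2_corner11) not_false
    · exact Or.inl ⟨(n+2)+3, S.g1_to_gb ⟨hA2, _, hx2, by linarith, he⟩⟩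
  have hx2 : S.x (n+2) = ((1 - -(S.m₂*p))/S.m₁, 1) := by
    rw [S.step_s1 hA1, hx1, S.s1_left_hi (by linarith) hy1b]
  have hA2 : altMove S.st (n+2) = true := by rw [altMove_succ, hA1]; rfl
  have hp2a : 0 < (1 - -(S.m₂*p))/S.m₁ := div_pos (by linarith) hm1'
  have hp2b : (1 - -(S.m₂*p))/S.m₁ < 1 := by rw [div_lt_one hm1']; linarith
  -- step 3
  rcases le_or_gt 0 (1 + S.m₂ * (1 - (1 - -(S.m₂*p))/S.m₁)) with hc3 | hc3
  · have hx3 : S.x (n+3) = (1, 1 + S.m₂ * (1 - (1 - -(S.m₂*p))/S.m₁)) := by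
      rw [S.step_s2 hA2, hx2, S.s2_top_hi hc3 hp2b]
    have hA3 : altMove S.st (n+3) = false := by rw [altMove_succ, hA2]; rfl
    have hy3b : 1 + S.m₂ * (1 - (1 - -(S.m₂*p))/S.m₁) < 1 := by
      have := mul_neg_of_neg_of_pos hm (sub_pos.2 hp2b); linarith
    rcases eq_or_lt_of_le hc3 with he | hy3a
    · exact absurd (S.no_stop1 hA3 (by rw [hx3, ← he]) S.stop_s1_corner10) not_false
    -- step 4
    rcases lt_trichotomy (1 + S.m₂ * (1 - (1 - -(S.m₂*p))/S.m₁)) S.m₁ with hc4 | hc4 | hc4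
    · have hx4 : S.x (n+4) =
          (1 - (1 + S.m₂ * (1 - (1 - -(S.m₂*p))/S.m₁))/S.m₁, 0) := by
        rw [S.step_s1 hA3, hx3, S.s1_right_lo hy3a (le_of_lt hc4)]
      have hA4 : altMove S.st (n+4) = true := by rw [altMove_succ, hA3]; rfl
      have ha : (1 + S.m₂ * (1 - (1 - -(S.m₂*p))/S.m₁))/S.m₁ < 1 := by
        rw [div_lt_one hm1']; linarith
      have hb : 0 < (1 + S.m₂ * (1 - (1 - -(S.m₂*p))/S.m₁))/S.m₁ := div_pos hy3a hm1'
      exact Or.inr ⟨_, hA4, hx4, by linarith, by linarith, by field_simp; ring⟩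
    · have hx4 : S.x (n+4) =
          (1 - (1 + S.m₂ * (1 - (1 - -(S.m₂*p))/S.m₁))/S.m₁, 0) := by
        rw [S.step_s1 hA3, hx3, S.s1_right_lo hy3a (le_of_eq hc4)]
      have hA4 : altMove S.st (n+4) = true := by rw [altMove_succ, hA3]; rfl
      have hz : S.x (n+4) = ((0:ℝ), (0:ℝ)) := by
        rw [hx4, hc4, div_self (ne_of_gt hm1')]; norm_num
      exact absurd (S.no_stop2 hA4 hz S.stop_s2_corner00) not_false
    · have hx4 : S.x (n+4) = (0, (1 + S.m₂ * (1 - (1 - -(S.m₂*p))/S.m₁)) - S.m₁) := by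
        rw [S.step_s1 hA3, hx3, S.s1_right_hi (le_of_lt hc4) (le_of_lt hy3b)]
      have hA4 : altMove S.st (n+4) = true := by rw [altMove_succ, hA3]; rfl
      exact Or.inl ⟨(n+4)+1, S.g3_to_gb ⟨hA4, _, hx4, by linarith, by linarith⟩⟩
  · -- exits to GB at n+3
    have hx3 : S.x (n+3) = ((1 - -(S.m₂*p))/S.m₁ - 1/S.m₂, 0) := by
      rw [S.step_s2 hA2, hx2, S.s2_top_lo (le_of_lt hp2a) (le_of_lt hc3)]
    have hA3 : altMove S.st (n+3) = false := by rw [altMove_succ, hA2]; rfl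
    have e : (1 - -(S.m₂*p))/S.m₁ - 1/S.m₂ - 1 =
        (1 + S.m₂ * (1 - (1 - -(S.m₂*p))/S.m₁)) * (-(1/S.m₂)) := by field_simp; ring
    have hlt : (1 - -(S.m₂*p))/S.m₁ - 1/S.m₂ < 1 := by
      have := mul_neg_of_neg_of_pos hc3 (by linarith : (0:ℝ) < -(1/S.m₂)); linarith
    exact Or.inl ⟨n+3, hA3, _, hx3, by linarith, hlt⟩

/-! ### Convergence from a good state -/

lemma conv {N : ℕ} (h : S.GB N) :
    Filter.Tendsto (fun n => Metric.infDist (S.x n) (orbitO S.m₁ S.m₂))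
      Filter.atTop (nhds 0) := by
  obtain ⟨hA, p, hx, h0, h1⟩ := h
  have hm1' := S.h₁; have hm2' := S.h₂; have h3 := S.h₃; have hm := S.hm2neg
  have hρ0 : 0 ≤ (S.m₁/S.m₂)^2 := sq_nonneg _
  have hρabs : |S.m₁/S.m₂| < 1 := by
    rw [abs_div, abs_of_pos hm1', abs_of_neg hm, div_lt_one (by linarith)]; linarith
  have hρ1 : (S.m₁/S.m₂)^2 < 1 := by
    nlinarith [sq_abs (S.m₁/S.m₂), abs_nonneg (S.m₁/S.m₂)]
  have H : ∀ k, ∃ q, altMove S.st (N+4*k) = false ∧ S.x (N+4*k) = (q, 0) ∧ 0 ≤ q ∧ q < 1 ∧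
      |q - (S.m₁-1)/(S.m₁+S.m₂)| ≤ ((S.m₁/S.m₂)^2)^k * |p - (S.m₁-1)/(S.m₁+S.m₂)| := by
    intro k; induction k with
    | zero => exact ⟨p, by simpa using hA, by simpa using hx, h0, h1, by simp⟩
    | succ k ih =>
      obtain ⟨q, hAk, hxk, hq0, hq1, hqd⟩ := ih
      obtain ⟨q', hA', hx', hq0', hq1', hrel, _⟩ := S.good_cycle hAk hxk hq0 hq1
      have hidx : N + 4*(k+1) = (N + 4*k) + 4 := by ring
      refine ⟨q', by rw [hidx]; exact hA', by rw [hidx]; exact hx', hq0', hq1', ?_⟩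
      calc |q' - (S.m₁-1)/(S.m₁+S.m₂)| = (S.m₁/S.m₂)^2 * |q - (S.m₁-1)/(S.m₁+S.m₂)| := by
            rw [hrel, abs_mul, abs_of_nonneg hρ0]
        _ ≤ (S.m₁/S.m₂)^2 * (((S.m₁/S.m₂)^2)^k * |p - (S.m₁-1)/(S.m₁+S.m₂)|) :=
            mul_le_mul_of_nonneg_left hqd hρ0
        _ = ((S.m₁/S.m₂)^2)^(k+1) * |p - (S.m₁-1)/(S.m₁+S.m₂)| := by ring
  have key : ∀ j, Metric.infDist (S.x (N+j)) (orbitO S.m₁ S.m₂) ≤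
      |p - (S.m₁-1)/(S.m₁+S.m₂)| * ((S.m₁/S.m₂)^2)^(j/4) := by
    intro j
    obtain ⟨q, hAk, hxk, hq0, hq1, hqd⟩ := H (j/4)
    obtain ⟨q', _, _, _, _, _, hdist⟩ := S.good_cycle hAk hxk hq0 hq1
    have hidx : N + j = (N + 4*(j/4)) + j % 4 := by omega
    calc Metric.infDist (S.x (N+j)) (orbitO S.m₁ S.m₂)
        = Metric.infDist (S.x ((N + 4*(j/4)) + j % 4)) (orbitO S.m₁ S.m₂) := by rw [← hidx]
      _ ≤ |q - (S.m₁-1)/(S.m₁+S.m₂)| := hdist (j % 4) (by omega)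
      _ ≤ ((S.m₁/S.m₂)^2)^(j/4) * |p - (S.m₁-1)/(S.m₁+S.m₂)| := hqd
      _ = |p - (S.m₁-1)/(S.m₁+S.m₂)| * ((S.m₁/S.m₂)^2)^(j/4) := by ring
  have t0 : Filter.Tendsto (fun n : ℕ => (n - N)/4) Filter.atTop Filter.atTop := by
    apply Filter.tendsto_atTop_atTop.2
    intro b; exact ⟨N + 4*b, fun a ha => by omega⟩
  have t1 : Filter.Tendsto
      (fun n : ℕ => |p - (S.m₁-1)/(S.m₁+S.m₂)| * ((S.m₁/S.m₂)^2)^((n-N)/4))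
      Filter.atTop (nhds 0) := by
    have hpow := tendsto_pow_atTop_nhds_zero_of_lt_one hρ0 hρ1
    have := (hpow.comp t0).const_mul (|p - (S.m₁-1)/(S.m₁+S.m₂)|)
    simpa using this
  apply tendsto_of_tendsto_of_tendsto_of_le_of_le' tendsto_const_nhds t1
  · exact Filter.Eventually.of_forall (fun n => Metric.infDist_nonneg)
  · refine Filter.eventually_atTop.2 ⟨N, fun n hn => ?_⟩
    have := key (n - N)
    rwa [show N + (n - N) = n by omega] at this

/-! ### Backward propagation of the orbit -/

lemma back {n : ℕ} (h : S.x (n+1) ∈ orbitO S.m₁ S.m₂) : S.x n ∈ orbitO S.m₁ S.m₂ := by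
  have hf := S.front n
  have hf1 := S.front (n+1)
  cases hA : altMove S.st n with
  | false =>
    have rel := S.hs₁ (S.x n) hf
    by_cases hmeet : meetsInterior unitSq ((1:ℝ), S.m₁) (S.x n)
    · obtain ⟨hfr, hne', t, ht⟩ := rel.2 hmeet
      have hstep := S.step_s1 hA
      have ht0 : t ≠ 0 := by
        intro h0; rw [h0, zero_smul, add_zero] at ht
        exact S.hne n (hstep.trans ht)
      have hxrel : S.x n = S.x (n+1) + (-t) • ((1:ℝ), S.m₁) := by
        rw [hstep, ht, add_assoc, ← add_smul, add_neg_cancel, zero_smul, add_zero]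
      have hback : S.s₁ (S.x (n+1)) = S.x n :=
        S.toACtx.s1_eq hf1 hf (neg_ne_zero.2 ht0) hxrel
      rw [S.toACtx.orbit_eq] at h
      simp only [Set.mem_insert_iff, Set.mem_singleton_iff] at h
      rcases h with h | h | h | h <;> rw [← hback, h]
      · rw [S.toACtx.s1o1]; exact S.toACtx.o2_mem
      · rw [S.toACtx.s1o2]; exact S.toACtx.o1_mem
      · rw [S.toACtx.s1o3]; exact S.toACtx.o4_mem
      · rw [S.toACtx.s1o4]; exact S.toACtx.o3_mem
    · exact absurd ((S.step_s1 hA).trans (rel.1 hmeet)) (S.hne n)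
  | true =>
    have rel := S.hs₂ (S.x n) hf
    by_cases hmeet : meetsInterior unitSq ((1:ℝ), S.m₂) (S.x n)
    · obtain ⟨hfr, hne', t, ht⟩ := rel.2 hmeet
      have hstep := S.step_s2 hA
      have ht0 : t ≠ 0 := by
        intro h0; rw [h0, zero_smul, add_zero] at ht
        exact S.hne n (hstep.trans ht)
      have hxrel : S.x n = S.x (n+1) + (-t) • ((1:ℝ), S.m₂) := by
        rw [hstep, ht, add_assoc, ← add_smul, add_neg_cancel, zero_smul, add_zero]
      have hback : S.s₂ (S.x (n+1)) = S.x n :=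
        S.toACtx.s2_eq hf1 hf (neg_ne_zero.2 ht0) hxrel
      rw [S.toACtx.orbit_eq] at h
      simp only [Set.mem_insert_iff, Set.mem_singleton_iff] at h
      rcases h with h | h | h | h <;> rw [← hback, h]
      · rw [S.toACtx.s2o1]; exact S.toACtx.o4_mem
      · rw [S.toACtx.s2o2]; exact S.toACtx.o3_mem
      · rw [S.toACtx.s2o3]; exact S.toACtx.o2_mem
      · rw [S.toACtx.s2o4]; exact S.toACtx.o1_mem
    · exact absurd ((S.step_s2 hA).trans (rel.1 hmeet)) (S.hne n)

lemma back_all {n : ℕ} (h : S.x n ∈ orbitO S.m₁ S.m₂) : S.x 0 ∈ orbitO S.m₁ S.m₂ := by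
  induction n with
  | zero => exact h
  | succ n ih => exact ih (S.back h)

/-! ### The dichotomy -/

lemma dichotomy : (∃ n, S.GB n) ∨ (∃ n, S.x n ∈ orbitO S.m₁ S.m₂) := by
  by_cases hg : ∃ n, S.GB n
  · exact Or.inl hg
  right
  rcases S.init with h | ⟨n0, hA0, p0, hx0', hp0a, hp0b⟩
  · exact absurd h hg
  have hm1' := S.h₁; have hm2' := S.h₂; have h3 := S.h₃; have hD := S.hD
  have H : ∀ k, ∃ q, altMove S.st (n0+4*k) = true ∧ S.x (n0+4*k) = (q, 0) ∧ 0 < q ∧ q ≤ 1 ∧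
      q - (S.m₁-1)/(S.m₁+S.m₂) = ((S.m₂/S.m₁)^2)^k * (p0 - (S.m₁-1)/(S.m₁+S.m₂)) := by
    intro k; induction k with
    | zero => exact ⟨p0, by simpa using hA0, by simpa using hx0', hp0a, hp0b, by simp⟩
    | succ k ih =>
      obtain ⟨q, hAk, hxk, hq0, hq1, hrel⟩ := ih
      rcases S.bb_cycle hAk hxk hq0 hq1 with hgb | ⟨q', hA', hx', hq0', hq1', hrel'⟩
      · exact absurd hgb hg
      have hidx : n0 + 4*(k+1) = (n0 + 4*k) + 4 := by ring
      refine ⟨q', by rw [hidx]; exact hA', by rw [hidx]; exact hx', hq0', hq1', ?_⟩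
      rw [hrel', hrel]; ring
  have hpstb : 0 < (S.m₁-1)/(S.m₁+S.m₂) ∧ (S.m₁-1)/(S.m₁+S.m₂) < 1 :=
    ACtx.div_mem01 hD (by linarith) (by linarith)
  by_cases hp : p0 = (S.m₁-1)/(S.m₁+S.m₂)
  · refine ⟨n0, ?_⟩
    rw [hx0', hp]
    exact S.toACtx.o1_mem
  · exfalso
    have hdpos : 0 < |p0 - (S.m₁-1)/(S.m₁+S.m₂)| := abs_pos.2 (sub_ne_zero.2 hp)
    have hlam : 1 < (S.m₂/S.m₁)^2 := by
      rw [div_pow, lt_div_iff₀ (pow_pos hm1' 2)]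
      nlinarith
    obtain ⟨k, hk⟩ := pow_unbounded_of_one_lt (1/|p0 - (S.m₁-1)/(S.m₁+S.m₂)|) hlam
    obtain ⟨q, hAk, hxk, hq0, hq1, hrel⟩ := H k
    have hb1 : |q - (S.m₁-1)/(S.m₁+S.m₂)| ≤ 1 :=
      abs_le.2 ⟨by linarith [hpstb.2], by linarith [hpstb.1]⟩
    have hb2 : 1 < |q - (S.m₁-1)/(S.m₁+S.m₂)| := by
      rw [hrel, abs_mul, abs_of_pos (pow_pos (by linarith) k)]
      rw [div_lt_iff₀ hdpos] at hk
      exact hk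
    linarith

end SeqCtx

/-- For antipode maps of the square in directions of slopes `0 < m₁ < 1` and `m₂ < -1`:
(i) the four points of `O` form a periodic orbit; (ii) `O` is the only finite orbit;
(iii) every forward alternating sequence avoiding `O` that never stops converges to `O`. -/
theorem orbitO_is_unique_attractor (m₁ m₂ : ℝ) (h₁ : 0 < m₁) (h₂ : m₁ < 1) (h₃ : m₂ < -1)
    (s₁ s₂ : Pt → Pt)
    (hs₁ : IsAntipodeMap unitSq ((1 : ℝ), m₁) s₁)
    (hs₂ : IsAntipodeMap unitSq ((1 : ℝ), m₂) s₂) :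
    (s₁ ((m₁ - 1) / (m₁ + m₂), 0) = (1, m₁ * (1 + m₂) / (m₁ + m₂)) ∧
     s₂ (1, m₁ * (1 + m₂) / (m₁ + m₂)) = ((1 + m₂) / (m₁ + m₂), 1) ∧
     s₁ ((1 + m₂) / (m₁ + m₂), 1) = (0, m₂ * (1 - m₁) / (m₁ + m₂)) ∧
     s₂ (0, m₂ * (1 - m₁) / (m₁ + m₂)) = ((m₁ - 1) / (m₁ + m₂), 0)) ∧
    (∀ b ∈ frontier unitSq, ∀ x : ℕ → Pt, ∀ st : Bool,
      x 0 = b →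
      (∀ n, x (n + 1) = (if altMove st n then s₂ else s₁) (x n)) →
      (∀ n, x (n + 1) ≠ x n) →
      (Set.range x).Finite →
      b ∈ orbitO m₁ m₂) ∧
    (∀ b ∈ frontier unitSq, b ∉ orbitO m₁ m₂ → ∀ x : ℕ → Pt, ∀ st : Bool,
      x 0 = b →
      (∀ n, x (n + 1) = (if altMove st n then s₂ else s₁) (x n)) →
      (∀ n, x (n + 1) ≠ x n) →
      Filter.Tendsto (fun n => Metric.infDist (x n) (orbitO m₁ m₂))
        Filter.atTop (nhds 0)) := by
  let C : ACtx := ⟨m₁, m₂, h₁, h₂, h₃, s₁, s₂, hs₁, hs₂⟩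
  refine ⟨⟨C.s1o1, C.s2o2, C.s1o3, C.s2o4⟩, ?_, ?_⟩
  · intro b hb x st hx0 hstep hne hfin
    let S : SeqCtx := ⟨C, x, st, by rw [hx0]; exact hb, hstep, hne⟩
    rcases S.dichotomy with ⟨N, hGB⟩ | ⟨n, hO⟩
    · have hconv : Filter.Tendsto (fun n => Metric.infDist (x n) (orbitO m₁ m₂))
          Filter.atTop (nhds 0) := S.conv hGB
      have hfib : ∃ y ∈ Set.range x, {n | x n = y}.Infinite := by
        by_contra hc
        push_neg at hc
        have hfin2 : (Set.univ : Set ℕ).Finite := by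
          refine (Set.Finite.biUnion hfin (fun v hv => hc v hv)).subset
            (fun n _ => Set.mem_biUnion ⟨n, rfl⟩ ?_)
          exact rfl
        exact Set.infinite_univ hfin2
      obtain ⟨y, hyr, hyinf⟩ := hfib
      have hy0 : Metric.infDist y (orbitO m₁ m₂) = 0 := by
        by_contra hy0
        have hpos : 0 < Metric.infDist y (orbitO m₁ m₂) :=
          lt_of_le_of_ne Metric.infDist_nonneg (Ne.symm hy0)
        obtain ⟨N', hN'⟩ := Filter.eventually_atTop.1 (hconv.eventually (gt_mem_nhds hpos))
        obtain ⟨m, hm, hmN⟩ := hyinf.exists_gt N'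
        have hlt := hN' m (le_of_lt hmN)
        have hm' : x m = y := hm
        rw [hm'] at hlt
        exact lt_irrefl _ hlt
      have hOfin : (orbitO m₁ m₂).Finite := by
        rw [orbitO]
        exact (((Set.finite_singleton _).insert _).insert _).insert _
      have hyO : y ∈ orbitO m₁ m₂ :=
        (hOfin.isClosed.mem_iff_infDist_zero ⟨_, C.o1_mem⟩).2 hy0
      obtain ⟨n, hn⟩ := hyinf.nonempty
      have hn' : x n = y := hn
      have hxO : S.x n ∈ orbitO S.m₁ S.m₂ := by
        show x n ∈ orbitO m₁ m₂
        rw [hn']; exact hyO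
      rw [← hx0]
      exact S.back_all hxO
    · rw [← hx0]
      exact S.back_all hO
  · intro b hb hbO x st hx0 hstep hne
    let S : SeqCtx := ⟨C, x, st, by rw [hx0]; exact hb, hstep, hne⟩
    rcases S.dichotomy with ⟨N, hGB⟩ | ⟨n, hO⟩
    · exact S.conv hGB
    · exact absurd (by rw [← hx0]; exact S.back_all hO) hbO

end
end

section
/- Let B = [0,1]² and let ℙ be the lateral nightrider, the piece with basic moves (2,1) and (2,−1). Then the denominator D(B^q, A_ℙ^q) of the inside-out polytope equals 1 if q = 1, equals 2 if q = 2, and equals 4 if q ≥ 3. -/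
noncomputable section


namespace IOPAux

lemma mem_sq {Bd : Board} (hBd : Bd.set = unitSq) {p : Pt} :
    p ∈ Bd.set ↔ 0 ≤ p.1 ∧ p.1 ≤ 1 ∧ 0 ≤ p.2 ∧ p.2 ≤ 1 := by
  rw [hBd]
  simp only [unitSq, Set.mem_Icc, Prod.le_def]
  constructor
  · rintro ⟨⟨u1, u2⟩, ⟨v1, v2⟩⟩; exact ⟨u1, v1, u2, v2⟩
  · rintro ⟨u1, v1, u2, v2⟩; exact ⟨⟨u1, u2⟩, ⟨v1, v2⟩⟩

lemma sq_mem {Bd : Board} (hBd : Bd.set = unitSq) {x y : ℝ}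
    (hx : 0 ≤ x) (hx1 : x ≤ 1) (hy : 0 ≤ y) (hy1 : y ≤ 1) : ((x, y) : Pt) ∈ Bd.set :=
  (mem_sq hBd).2 ⟨hx, hx1, hy, hy1⟩

/-- Classification of the defining inequalities of a board whose set is the unit square. -/
lemma classify {Bd : Board} (hBd : Bd.set = unitSq) (e : Fin Bd.s) :
    (Bd.A e = 0 ∧ Bd.β e = 0) ∨
    ∃ t : ℝ, 0 < t ∧
      ((Bd.A e = (t, 0) ∧ Bd.β e = t) ∨ (Bd.A e = (-t, 0) ∧ Bd.β e = 0) ∨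
       (Bd.A e = (0, t) ∧ Bd.β e = t) ∨ (Bd.A e = (0, -t) ∧ Bd.β e = 0)) := by
  obtain ⟨u, v, huv, hu, hv, hue, hve⟩ := Bd.edges e
  have hu' : u ∈ Bd.set := hu
  have hv' : v ∈ Bd.set := hv
  obtain ⟨hu0, hu1, hu2, hu3⟩ := (mem_sq hBd).1 hu'
  obtain ⟨hv0, hv1, hv2, hv3⟩ := (mem_sq hBd).1 hv'
  set a1 := (Bd.A e).1 with ha1
  set a2 := (Bd.A e).2 with ha2
  have hle : ∀ x y : ℝ, 0 ≤ x → x ≤ 1 → 0 ≤ y → y ≤ 1 → a1 * x + a2 * y ≤ Bd.β e := by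
    intro x y hx hx1 hy hy1
    have h := (sq_mem hBd hx hx1 hy hy1) e
    simpa [dotp] using h
  have hueq : a1 * u.1 + a2 * u.2 = Bd.β e := hue
  have hveq : a1 * v.1 + a2 * v.2 = Bd.β e := hve
  -- one of a1, a2 must vanish
  have hzero : a1 = 0 ∨ a2 = 0 := by
    by_contra hcon
    push_neg at hcon
    obtain ⟨h1, h2⟩ := hcon
    have k1 := hle u.1 v.2 hu0 hu1 hv2 hv3
    have k2 := hle v.1 u.2 hv0 hv1 hu2 hu3
    have e2 : u.2 = v.2 := by
      have : a2 * v.2 ≤ a2 * u.2 := by linarith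
      have : a2 * u.2 ≤ a2 * v.2 := by linarith
      have heq : a2 * u.2 = a2 * v.2 := le_antisymm this (by linarith)
      exact mul_left_cancel₀ h2 heq
    have e1 : u.1 = v.1 := by
      have heq : a1 * u.1 = a1 * v.1 := by linarith
      exact mul_left_cancel₀ h1 heq
    exact huv (Prod.ext e1 e2)
  by_cases hA1 : a1 = 0
  · by_cases hA2 : a2 = 0
    · left
      constructor
      · have : Bd.A e = (a1, a2) := rfl
        rw [this, hA1, hA2]; rfl
      · rw [← hueq, hA1, hA2]; ring
    · right
      have hAe : Bd.A e = (0, a2) := by rw [← hA1]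
      rcases lt_or_gt_of_ne hA2 with hneg | hpos
      · refine ⟨-a2, by linarith, Or.inr (Or.inr (Or.inr ⟨by rw [hAe]; ring_nf, ?_⟩))⟩
        have k1 := hle 0 0 le_rfl zero_le_one le_rfl zero_le_one
        have : Bd.β e ≤ 0 := by nlinarith
        linarith
      · refine ⟨a2, hpos, Or.inr (Or.inr (Or.inl ⟨hAe, ?_⟩))⟩
        have k1 := hle 0 1 le_rfl zero_le_one zero_le_one le_rfl
        have : Bd.β e ≤ a2 := by nlinarith
        linarith
  · have hA2 : a2 = 0 := hzero.resolve_left hA1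
    right
    have hAe : Bd.A e = (a1, 0) := by rw [← hA2]
    rcases lt_or_gt_of_ne hA1 with hneg | hpos
    · refine ⟨-a1, by linarith, Or.inr (Or.inl ⟨by rw [hAe]; ring_nf, ?_⟩)⟩
      have k1 := hle 0 0 le_rfl zero_le_one le_rfl zero_le_one
      have : Bd.β e ≤ 0 := by nlinarith
      linarith
    · refine ⟨a1, hpos, Or.inl ⟨hAe, ?_⟩⟩
      have k1 := hle 1 0 zero_le_one le_rfl le_rfl zero_le_one
      have : Bd.β e ≤ a1 := by nlinarith
      linarith

lemma confDot_unitVec {q : ℕ} (i : Fin q) (a : Pt) (w : Conf q) :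
    confDot (unitVec i a) w = dotp a (w i) := by
  have h : ∀ k, dotp (unitVec i a k) (w k) = if k = i then dotp a (w k) else 0 := by
    intro k
    by_cases hk : k = i <;> simp [unitVec, hk, dotp]
  simp only [confDot, h]
  simp

lemma confDot_attack {q : ℕ} {i j : Fin q} (hij : i ≠ j) (n : Pt) (w : Conf q) :
    confDot (attackNormal i j n) w = dotp n (w i) - dotp n (w j) := by
  have h : ∀ k, dotp (attackNormal i j n k) (w k) =
      (if k = i then dotp n (w k) else 0) + (if k = j then -dotp n (w k) else 0) := by
    intro k
    by_cases hki : k = i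
    · subst hki
      simp [attackNormal, hij, dotp]
    · by_cases hkj : k = j
      · subst hkj
        simp [attackNormal, hki, dotp]
        ring
      · simp [attackNormal, hki, hkj, dotp]
  simp only [confDot, h, Finset.sum_add_distrib]
  simp
  ring


/-- The perturbation function used to prove integrality of vertices. -/
noncomputable def nf (a : ℝ) : ℝ := a + Real.sin (Real.pi * a)

lemma nf_neg (a : ℝ) : nf (-a) = - nf a := by
  unfold nf
  rw [mul_neg, Real.sin_neg]
  ring

lemma nf_two_sub (a : ℝ) : nf (2 - a) = 2 - nf a := by
  unfold nf
  have h : Real.pi * (2 - a) = 2 * Real.pi - Real.pi * a := by ring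
  rw [h, Real.sin_sub, Real.sin_two_pi, Real.cos_two_pi]
  ring

lemma nf_sub_four (a : ℝ) : nf (a - 4) = nf a - 4 := by
  unfold nf
  have h : Real.pi * (a - 4) = (Real.pi * a - 2 * Real.pi) - 2 * Real.pi := by ring
  rw [h, Real.sin_sub_two_pi, Real.sin_sub_two_pi]
  ring

lemma nf_fixed {a : ℝ} (h : nf a = a) : ∃ n : ℤ, a = (n : ℝ) := by
  unfold nf at h
  have hs : Real.sin (Real.pi * a) = 0 := by linarith
  rw [Real.sin_eq_zero_iff] at hs
  obtain ⟨n, hn⟩ := hs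
  rw [mul_comm] at hn
  exact ⟨n, (mul_left_cancel₀ Real.pi_ne_zero hn).symm⟩

lemma anorm_false {P : Piece} (h1 : P.c false = 2) (h2 : P.d false = 1) :
    P.anorm false = ((1 : ℝ), (-2 : ℝ)) := by
  simp [Piece.anorm, h1, h2]

lemma anorm_true {P : Piece} (h3 : P.c true = 2) (h4 : P.d true = -1) :
    P.anorm true = ((-1 : ℝ), (-2 : ℝ)) := by
  simp [Piece.anorm, h3, h4]

/-- Main integrality lemma: at any vertex, `x + 2y` and `x - 2y` are integers. -/
lemma vertex_int {Bd : Board} (hBd : Bd.set = unitSq) {P : Piece}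
    (h1 : P.c false = 2) (h2 : P.d false = 1) (h3 : P.c true = 2) (h4 : P.d true = -1)
    {q : ℕ} {z : Conf q} (hz : IsVertex Bd P z) (i : Fin q) :
    (∃ a : ℤ, (z i).1 + 2 * (z i).2 = (a : ℝ)) ∧
    (∃ b : ℤ, (z i).1 - 2 * (z i).2 = (b : ℝ)) := by
  obtain ⟨hin, H', hsub, hsol⟩ := hz
  set w : Conf q := fun k =>
    ((nf ((z k).1 + 2 * (z k).2) + nf ((z k).1 - 2 * (z k).2)) / 2,
     (nf ((z k).1 + 2 * (z k).2) - nf ((z k).1 - 2 * (z k).2)) / 4) with hwdef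
  have hwk1 : ∀ k, (w k).1 =
      (nf ((z k).1 + 2 * (z k).2) + nf ((z k).1 - 2 * (z k).2)) / 2 := fun _ => rfl
  have hwk2 : ∀ k, (w k).2 =
      (nf ((z k).1 + 2 * (z k).2) - nf ((z k).1 - 2 * (z k).2)) / 4 := fun _ => rfl
  have hwsol : ∀ h ∈ H', confDot h.1 w = h.2 := by
    intro h hh
    rcases hsub hh with ⟨i', j', r, hij, hcond, rfl⟩ | ⟨i', e, hcond, rfl⟩
    · -- attack hyperplane
      rw [IOPAux.confDot_attack (ne_of_lt hij)]
      cases r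
      · rw [anorm_false h1 h2] at hcond ⊢
        have hc : (z i').1 - 2 * (z i').2 = (z j').1 - 2 * (z j').2 := by
          simp [dotp] at hcond; linarith
        have hk : ∀ k, dotp ((1 : ℝ), (-2 : ℝ)) (w k) = nf ((z k).1 - 2 * (z k).2) := by
          intro k
          simp only [dotp, hwk1, hwk2]
          ring
        rw [hk, hk, hc]
        ring
      · rw [anorm_true h3 h4] at hcond ⊢
        have hc : (z i').1 + 2 * (z i').2 = (z j').1 + 2 * (z j').2 := by
          simp [dotp] at hcond; linarith
        have hk : ∀ k, dotp ((-1 : ℝ), (-2 : ℝ)) (w k) = - nf ((z k).1 + 2 * (z k).2) := by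
          intro k
          simp only [dotp, hwk1, hwk2]
          ring
        rw [hk, hk, hc]
        ring
    · -- fixation hyperplane
      rw [IOPAux.confDot_unitVec]
      rcases IOPAux.classify hBd e with ⟨hA, hβ⟩ | ⟨t, ht, hcase⟩
      · rw [hA, hβ]
        simp [dotp]
      · have ht' : t ≠ 0 := ne_of_gt ht
        rcases hcase with ⟨hA, hβ⟩ | ⟨hA, hβ⟩ | ⟨hA, hβ⟩ | ⟨hA, hβ⟩ <;>
            rw [hA, hβ] at hcond ⊢ <;>
            simp only [dotp] at hcond ⊢
        · -- x = 1
          have hx : (z i').1 = 1 := mul_left_cancel₀ ht' (by linarith)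
          have hv : (z i').1 - 2 * (z i').2 = 2 - ((z i').1 + 2 * (z i').2) := by linarith
          rw [hwk1, hwk2, hv, nf_two_sub]
          ring
        · -- x = 0
          have hx : (z i').1 = 0 := mul_left_cancel₀ ht' (show t * (z i').1 = t * 0 by linarith)
          have hv : (z i').1 - 2 * (z i').2 = -((z i').1 + 2 * (z i').2) := by linarith
          rw [hwk1, hwk2, hv, nf_neg]
          ring
        · -- y = 1
          have hy : (z i').2 = 1 := mul_left_cancel₀ ht' (by linarith)
          have hv : (z i').1 - 2 * (z i').2 = ((z i').1 + 2 * (z i').2) - 4 := by linarith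
          rw [hwk1, hwk2, hv, nf_sub_four]
          ring
        · -- y = 0
          have hy : (z i').2 = 0 := mul_left_cancel₀ ht' (show t * (z i').2 = t * 0 by linarith)
          have hv : (z i').1 - 2 * (z i').2 = (z i').1 + 2 * (z i').2 := by linarith
          rw [hwk1, hwk2, hv]
          ring
  have hwz : w = z := by
    have : w ∈ ({z} : Set (Conf q)) := by rw [← hsol]; exact hwsol
    simpa using this
  have hwi := congrFun hwz i
  have hw1 : (nf ((z i).1 + 2 * (z i).2) + nf ((z i).1 - 2 * (z i).2)) / 2 = (z i).1 :=
    congrArg Prod.fst hwi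
  have hw2 : (nf ((z i).1 + 2 * (z i).2) - nf ((z i).1 - 2 * (z i).2)) / 4 = (z i).2 :=
    congrArg Prod.snd hwi
  have hfu : nf ((z i).1 + 2 * (z i).2) = (z i).1 + 2 * (z i).2 := by linarith
  have hfv : nf ((z i).1 - 2 * (z i).2) = (z i).1 - 2 * (z i).2 := by linarith
  exact ⟨nf_fixed hfu, nf_fixed hfv⟩


/-- The `q = 1` case: both coordinates of a vertex are `0` or `1`. -/
lemma vertex_q1 {Bd : Board} (hBd : Bd.set = unitSq) {P : Piece}
    {z : Conf 1} (hz : IsVertex Bd P z) (i : Fin 1) :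
    ((z i).1 = 0 ∨ (z i).1 = 1) ∧ ((z i).2 = 0 ∨ (z i).2 = 1) := by
  obtain ⟨hin, H', hsub, hsol⟩ := hz
  set w : Conf 1 := fun k => ((z k).1 ^ 2, (z k).2 ^ 2) with hwdef
  have hwsol : ∀ h ∈ H', confDot h.1 w = h.2 := by
    intro h hh
    rcases hsub hh with ⟨i', j', r, hij, hcond, rfl⟩ | ⟨i', e, hcond, rfl⟩
    · have := Subsingleton.elim i' j'
      subst this
      exact absurd hij (lt_irrefl _)
    · rw [IOPAux.confDot_unitVec]
      rcases IOPAux.classify hBd e with ⟨hA, hβ⟩ | ⟨t, ht, hcase⟩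
      · rw [hA, hβ]
        simp [dotp]
      · have ht' : t ≠ 0 := ne_of_gt ht
        rcases hcase with ⟨hA, hβ⟩ | ⟨hA, hβ⟩ | ⟨hA, hβ⟩ | ⟨hA, hβ⟩ <;>
            rw [hA, hβ] at hcond ⊢ <;> simp only [dotp] at hcond ⊢
        · have hx : (z i').1 = 1 := mul_left_cancel₀ ht' (by linarith)
          simp only [hwdef, hx]; ring
        · have hx : (z i').1 = 0 := mul_left_cancel₀ ht' (show t * (z i').1 = t * 0 by linarith)
          simp only [hwdef, hx]; ring
        · have hy : (z i').2 = 1 := mul_left_cancel₀ ht' (by linarith)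
          simp only [hwdef, hy]; ring
        · have hy : (z i').2 = 0 := mul_left_cancel₀ ht' (show t * (z i').2 = t * 0 by linarith)
          simp only [hwdef, hy]; ring
  have hwz : w = z := by
    have : w ∈ ({z} : Set (Conf 1)) := by rw [← hsol]; exact hwsol
    simpa using this
  have hwi := congrFun hwz i
  have c1 : (z i).1 ^ 2 = (z i).1 := congrArg Prod.fst hwi
  have c2 : (z i).2 ^ 2 = (z i).2 := congrArg Prod.snd hwi
  constructor
  · rcases mul_eq_zero.mp (show (z i).1 * ((z i).1 - 1) = 0 by nlinarith) with h | h
    · exact Or.inl h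
    · exact Or.inr (by linarith)
  · rcases mul_eq_zero.mp (show (z i).2 * ((z i).2 - 1) = 0 by nlinarith) with h | h
    · exact Or.inl h
    · exact Or.inr (by linarith)

/-- The `q = 2` case: `x` is an integer and `y` is a half-integer at every vertex. -/
lemma vertex_q2 {Bd : Board} (hBd : Bd.set = unitSq) {P : Piece}
    (h1 : P.c false = 2) (h2 : P.d false = 1) (h3 : P.c true = 2) (h4 : P.d true = -1)
    {z : Conf 2} (hz : IsVertex Bd P z) (i : Fin 2) :
    (∃ a : ℤ, (z i).1 = (a : ℝ)) ∧ (∃ b : ℤ, (z i).2 = (b : ℝ) / 2) := by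
  have hint := fun j => vertex_int hBd h1 h2 h3 h4 hz j
  obtain ⟨hin, H', hsub, hsol⟩ := hz
  have hzsol : ∀ h ∈ H', confDot h.1 z = h.2 := by
    have hzz : z ∈ ({z} : Set (Conf 2)) := rfl
    rw [← hsol] at hzz
    exact hzz
  obtain ⟨⟨aa, haa⟩, ⟨bb, hbb⟩⟩ := hint i
  have hnotodd : ¬ Odd (aa - bb) := by
    intro hodd
    obtain ⟨mm, hmm⟩ := hodd
    -- no nontrivial fixation at an index whose value is `z i`
    have hparfix : ∀ (k : Fin 2) (e : Fin Bd.s), z k = z i →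
        (unitVec k (Bd.A e), Bd.β e) ∈ H' → Bd.A e = 0 := by
      intro k e hzk he
      rcases IOPAux.classify hBd e with ⟨hA, _⟩ | ⟨t, ht, hcase⟩
      · exact hA
      · exfalso
        have hc := hzsol _ he
        rw [IOPAux.confDot_unitVec, hzk] at hc
        rcases hcase with ⟨hA, hβ⟩ | ⟨hA, hβ⟩ | ⟨hA, hβ⟩ | ⟨hA, hβ⟩ <;>
            rw [hA, hβ] at hc <;> simp only [dotp] at hc
        · have hx : (z i).1 = 1 := mul_left_cancel₀ (ne_of_gt ht) (by linarith)
          have hr : (aa : ℝ) + bb = 2 := by linarith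
          have h2' : aa + bb = 2 := by exact_mod_cast hr
          omega
        · have hx : (z i).1 = 0 :=
            mul_left_cancel₀ (ne_of_gt ht) (show t * (z i).1 = t * 0 by linarith)
          have hr : (aa : ℝ) + bb = 0 := by linarith
          have h2' : aa + bb = 0 := by exact_mod_cast hr
          omega
        · have hy : (z i).2 = 1 := mul_left_cancel₀ (ne_of_gt ht) (by linarith)
          have hr : (aa : ℝ) - bb = 4 := by linarith
          have h2' : aa - bb = 4 := by exact_mod_cast hr
          omega
        · have hy : (z i).2 = 0 :=
            mul_left_cancel₀ (ne_of_gt ht) (show t * (z i).2 = t * 0 by linarith)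
          have hr : (aa : ℝ) - bb = 0 := by linarith
          have h2' : aa - bb = 0 := by exact_mod_cast hr
          omega
    by_cases hBoth : (attackNormal (0 : Fin 2) 1 (P.anorm false), (0:ℝ)) ∈ H' ∧
        (attackNormal (0 : Fin 2) 1 (P.anorm true), (0:ℝ)) ∈ H'
    · obtain ⟨hm0, hm1⟩ := hBoth
      have e0 := hzsol _ hm0
      have e1 := hzsol _ hm1
      rw [IOPAux.confDot_attack (show (0 : Fin 2) ≠ 1 by decide), anorm_false h1 h2] at e0
      rw [IOPAux.confDot_attack (show (0 : Fin 2) ≠ 1 by decide), anorm_true h3 h4] at e1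
      simp only [dotp] at e0 e1
      have hz01 : z 0 = z 1 := Prod.ext (by linarith) (by linarith)
      have hzk : ∀ k : Fin 2, z k = z i := by
        have hall : ∀ m : Fin 2, z m = z 0 := by
          intro m
          fin_cases m
          · rfl
          · exact hz01.symm
        intro k
        rw [hall k, hall i]
      set w' : Conf 2 := fun k => ((z k).1 + 1, (z k).2) with hw'
      have hw'sol : ∀ h ∈ H', confDot h.1 w' = h.2 := by
        intro h hh
        have hzh := hzsol h hh
        rcases hsub hh with ⟨i', j', r, hij, hcond, rfl⟩ | ⟨i', e, hcond, rfl⟩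
        · rw [IOPAux.confDot_attack (ne_of_lt hij)] at hzh ⊢
          simp only [dotp] at hzh ⊢
          linarith
        · have hA := hparfix i' e (hzk i') hh
          rw [IOPAux.confDot_unitVec, hA] at hzh ⊢
          simp only [dotp] at hzh ⊢
          simpa using hzh
      have hw'z : w' = z := by
        have : w' ∈ ({z} : Set (Conf 2)) := by rw [← hsol]; exact hw'sol
        simpa using this
      have := congrArg Prod.fst (congrFun hw'z 0)
      simp only [hw'] at this
      linarith [this]
    · obtain ⟨r0, hr0⟩ : ∃ r0 : Bool, ∀ r : Bool,
          (attackNormal (0 : Fin 2) 1 (P.anorm r), (0:ℝ)) ∈ H' → r = r0 := by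
        by_cases hA0 : (attackNormal (0 : Fin 2) 1 (P.anorm false), (0:ℝ)) ∈ H'
        · refine ⟨false, fun r hr => ?_⟩
          cases r
          · rfl
          · exact absurd ⟨hA0, hr⟩ hBoth
        · refine ⟨true, fun r hr => ?_⟩
          cases r
          · exact absurd hr hA0
          · rfl
      have horth : (P.anorm r0).1 * (P.mv r0).1 + (P.anorm r0).2 * (P.mv r0).2 = 0 := by
        cases r0 <;> simp [Piece.anorm, Piece.mv, h1, h2, h3, h4] <;> ring
      have hmv1 : (P.mv r0).1 = 2 := by
        cases r0 <;> simp [Piece.mv, h1, h3]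
      set w' : Conf 2 := fun k =>
        if k = i then ((z k).1 + (P.mv r0).1, (z k).2 + (P.mv r0).2) else z k with hw'
      have hw'sol : ∀ h ∈ H', confDot h.1 w' = h.2 := by
        intro h hh
        have hzh := hzsol h hh
        rcases hsub hh with ⟨i', j', r, hij, hcond, rfl⟩ | ⟨i', e, hcond, rfl⟩
        · have hi0 : i' = 0 := by
            have hv : (i' : ℕ) < (j' : ℕ) := hij
            have hj2 : (j' : ℕ) < 2 := j'.isLt
            exact Fin.ext (by omega)
          have hj1 : j' = 1 := by
            have hv : (i' : ℕ) < (j' : ℕ) := hij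
            have hj2 : (j' : ℕ) < 2 := j'.isLt
            exact Fin.ext (by omega)
          subst hi0; subst hj1
          have hrr : r = r0 := hr0 r hh
          rw [hrr] at hzh ⊢
          rw [IOPAux.confDot_attack (show (0 : Fin 2) ≠ 1 by decide)] at hzh ⊢
          have hd : ∀ k : Fin 2, dotp (P.anorm r0) (w' k) = dotp (P.anorm r0) (z k) := by
            intro k
            by_cases hk : k = i
            · simp only [hw', if_pos hk, dotp]
              nlinarith [horth]
            · simp only [hw', if_neg hk]
          rw [hd, hd]
          exact hzh
        · by_cases hk : i' = i
          · subst hk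
            have hA := hparfix i' e rfl hh
            rw [IOPAux.confDot_unitVec, hA] at hzh ⊢
            simp only [dotp] at hzh ⊢
            simpa using hzh
          · rw [IOPAux.confDot_unitVec] at hzh ⊢
            have hww : w' i' = z i' := by simp only [hw', if_neg hk]
            rw [hww]
            exact hzh
      have hw'z : w' = z := by
        have : w' ∈ ({z} : Set (Conf 2)) := by rw [← hsol]; exact hw'sol
        simpa using this
      have hcontra := congrArg Prod.fst (congrFun hw'z i)
      simp only [hw', if_pos rfl] at hcontra
      rw [hmv1] at hcontra
      simp at hcontra
  have heven : Even (aa - bb) := Int.not_odd_iff_even.1 hnotodd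
  obtain ⟨m, hm⟩ := heven
  have hmr : (aa : ℝ) - bb = m + m := by exact_mod_cast congrArg (Int.cast : ℤ → ℝ) hm
  refine ⟨⟨bb + m, ?_⟩, ⟨m, ?_⟩⟩
  · push_cast
    linarith
  · push_cast
    linarith

/-- The board has defining inequalities for the left, right and bottom edges. -/
lemma exists_edges {Bd : Board} (hBd : Bd.set = unitSq) :
    (∃ e, ∃ t : ℝ, 0 < t ∧ Bd.A e = (-t, 0) ∧ Bd.β e = 0) ∧
    (∃ e, ∃ t : ℝ, 0 < t ∧ Bd.A e = (t, 0) ∧ Bd.β e = t) ∧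
    (∃ e, ∃ t : ℝ, 0 < t ∧ Bd.A e = (0, -t) ∧ Bd.β e = 0) := by
  refine ⟨?_, ?_, ?_⟩
  · by_contra hc
    push_neg at hc
    have hmem : ∀ j, dotp (Bd.A j) (((-1 : ℝ), (1/2 : ℝ)) : Pt) ≤ Bd.β j := by
      intro e
      rcases IOPAux.classify hBd e with ⟨hA, hβ⟩ | ⟨t, ht, hcase⟩
      · rw [hA, hβ]; simp [dotp]
      rcases hcase with ⟨hA, hβ⟩ | ⟨hA, hβ⟩ | ⟨hA, hβ⟩ | ⟨hA, hβ⟩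
      · rw [hA, hβ]; simp only [dotp]; linarith
      · exact absurd hβ (hc e t ht hA)
      · rw [hA, hβ]; simp only [dotp]; linarith
      · rw [hA, hβ]; simp only [dotp]; linarith
    have : (((-1 : ℝ), (1/2 : ℝ)) : Pt) ∈ Bd.set := hmem
    have := ((IOPAux.mem_sq hBd).1 this).1
    norm_num at this
  · by_contra hc
    push_neg at hc
    have hmem : ∀ j, dotp (Bd.A j) (((2 : ℝ), (1/2 : ℝ)) : Pt) ≤ Bd.β j := by
      intro e
      rcases IOPAux.classify hBd e with ⟨hA, hβ⟩ | ⟨t, ht, hcase⟩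
      · rw [hA, hβ]; simp [dotp]
      rcases hcase with ⟨hA, hβ⟩ | ⟨hA, hβ⟩ | ⟨hA, hβ⟩ | ⟨hA, hβ⟩
      · exact absurd hβ (hc e t ht hA)
      · rw [hA, hβ]; simp only [dotp]; linarith
      · rw [hA, hβ]; simp only [dotp]; linarith
      · rw [hA, hβ]; simp only [dotp]; linarith
    have : (((2 : ℝ), (1/2 : ℝ)) : Pt) ∈ Bd.set := hmem
    have := ((IOPAux.mem_sq hBd).1 this).2.1
    norm_num at this
  · by_contra hc
    push_neg at hc
    have hmem : ∀ j, dotp (Bd.A j) (((1/2 : ℝ), (-1 : ℝ)) : Pt) ≤ Bd.β j := by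
      intro e
      rcases IOPAux.classify hBd e with ⟨hA, hβ⟩ | ⟨t, ht, hcase⟩
      · rw [hA, hβ]; simp [dotp]
      rcases hcase with ⟨hA, hβ⟩ | ⟨hA, hβ⟩ | ⟨hA, hβ⟩ | ⟨hA, hβ⟩
      · rw [hA, hβ]; simp only [dotp]; linarith
      · rw [hA, hβ]; simp only [dotp]; linarith
      · rw [hA, hβ]; simp only [dotp]; linarith
      · exact absurd hβ (hc e t ht hA)
    have : (((1/2 : ℝ), (-1 : ℝ)) : Pt) ∈ Bd.set := hmem
    have := ((IOPAux.mem_sq hBd).1 this).2.2.1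
    norm_num at this

lemma denDvd_intcast (x : ℝ) (a : ℤ) (h : x = (a : ℝ)) (D : ℕ) : DenDvd x D :=
  ⟨(a : ℚ), by simp [h], by simp⟩

lemma denDvd_div (x : ℝ) (a : ℤ) (n : ℕ) (hn : (n : ℝ) ≠ 0) (h : (n : ℝ) * x = (a : ℝ))
    {D : ℕ} (hD : n ∣ D) : DenDvd x D := by
  refine ⟨(a : ℚ) / (n : ℚ), ?_, ?_⟩
  · push_cast
    rw [div_eq_iff hn]
    linarith
  · have hd : ((a : ℚ) / ((n : ℤ) : ℚ)).den ∣ ((n : ℤ)).natAbs := by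
      have hdd := Rat.den_dvd a (n : ℤ)
      rw [Rat.divInt_eq_div] at hdd
      exact Int.natCast_dvd.mp hdd
    simp only [Int.cast_natCast, Int.natAbs_natCast] at hd
    exact dvd_trans hd hD

lemma dvd_of_denDvd {x : ℚ} {D : ℕ} (h : DenDvd ((x : ℝ)) D) : x.den ∣ D := by
  obtain ⟨p, hp, hd⟩ := h
  have hpx : p = x := by exact_mod_cast hp
  rwa [hpx] at hd

/-- The vertex `((0,0),(1,1/2))` for `q = 2`. -/
lemma vertex2_exists {Bd : Board} (hBd : Bd.set = unitSq) {P : Piece}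
    (h1 : P.c false = 2) (h2 : P.d false = 1) :
    ∃ z : Conf 2, IsVertex Bd P z ∧ z 1 = ((1 : ℝ), (1/2 : ℝ)) := by
  obtain ⟨⟨eL, tL, htL, hAL, hβL⟩, ⟨eR, tR, htR, hAR, hβR⟩, ⟨eB, tB, htB, hAB, hβB⟩⟩ :=
    exists_edges hBd
  set z : Conf 2 := fun k => if k = 0 then ((0:ℝ), (0:ℝ)) else ((1:ℝ), (1/2:ℝ)) with hzdef
  have hz0 : z 0 = ((0:ℝ), (0:ℝ)) := by simp [hzdef]
  have hz1 : z 1 = ((1:ℝ), (1/2:ℝ)) := by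
    simp [hzdef, show (1 : Fin 2) ≠ 0 by decide]
  refine ⟨z, ⟨?_, ?_⟩, hz1⟩
  · intro k
    fin_cases k
    · show z 0 ∈ Bd.set
      rw [hz0]
      exact IOPAux.sq_mem hBd le_rfl zero_le_one le_rfl zero_le_one
    · show z 1 ∈ Bd.set
      rw [hz1]
      exact IOPAux.sq_mem hBd (by norm_num) (by norm_num) (by norm_num) (by norm_num)
  · refine ⟨{(unitVec 0 (Bd.A eL), Bd.β eL), (unitVec 0 (Bd.A eB), Bd.β eB),
      (unitVec 1 (Bd.A eR), Bd.β eR), (attackNormal 0 1 (P.anorm false), (0:ℝ))}, ?_, ?_⟩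
    · intro h hh
      simp only [Set.mem_insert_iff, Set.mem_singleton_iff] at hh
      rcases hh with rfl | rfl | rfl | rfl
      · exact Or.inr ⟨0, eL, by rw [hz0, hAL, hβL]; simp [dotp], rfl⟩
      · exact Or.inr ⟨0, eB, by rw [hz0, hAB, hβB]; simp [dotp], rfl⟩
      · exact Or.inr ⟨1, eR, by rw [hz1, hAR, hβR]; simp [dotp], rfl⟩
      · refine Or.inl ⟨0, 1, false, by decide, ?_, rfl⟩
        rw [anorm_false h1 h2, hz0, hz1]
        norm_num [dotp, Prod.sub_def]
    · ext ww
      simp only [Set.mem_setOf_eq, Set.mem_singleton_iff]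
      constructor
      · intro hww
        have k1 := hww _ (Or.inl rfl)
        have k2 := hww _ (Or.inr (Or.inl rfl))
        have k3 := hww _ (Or.inr (Or.inr (Or.inl rfl)))
        have k4 := hww _ (Or.inr (Or.inr (Or.inr rfl)))
        rw [IOPAux.confDot_unitVec, hAL, hβL] at k1
        rw [IOPAux.confDot_unitVec, hAB, hβB] at k2
        rw [IOPAux.confDot_unitVec, hAR, hβR] at k3
        rw [IOPAux.confDot_attack (show (0:Fin 2) ≠ 1 by decide), anorm_false h1 h2] at k4
        simp only [dotp] at k1 k2 k3 k4
        have hx0 : (ww 0).1 = 0 := by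
          have := mul_left_cancel₀ (ne_of_gt htL) (show tL * (ww 0).1 = tL * 0 by linarith)
          linarith
        have hy0 : (ww 0).2 = 0 := by
          have := mul_left_cancel₀ (ne_of_gt htB) (show tB * (ww 0).2 = tB * 0 by linarith)
          linarith
        have hx1 : (ww 1).1 = 1 := mul_left_cancel₀ (ne_of_gt htR) (by linarith)
        have hy1 : (ww 1).2 = 1/2 := by linarith
        funext k
        fin_cases k
        · show ww 0 = z 0
          rw [hz0]
          exact Prod.ext hx0 hy0
        · show ww 1 = z 1
          rw [hz1]
          exact Prod.ext hx1 hy1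
      · rintro rfl
        intro h hh
        simp only [Set.mem_insert_iff, Set.mem_singleton_iff] at hh
        rcases hh with rfl | rfl | rfl | rfl
        · rw [IOPAux.confDot_unitVec, hAL, hβL, hz0]; simp [dotp]
        · rw [IOPAux.confDot_unitVec, hAB, hβB, hz0]; simp [dotp]
        · rw [IOPAux.confDot_unitVec, hAR, hβR, hz1]; simp [dotp]
        · rw [IOPAux.confDot_attack (show (0:Fin 2) ≠ 1 by decide), anorm_false h1 h2, hz0, hz1]
          norm_num [dotp, Prod.sub_def]

/-- A vertex containing the point `(1/2, 1/4)`, for `q ≥ 3`. -/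
lemma vertex3_exists {Bd : Board} (hBd : Bd.set = unitSq) {P : Piece}
    (h1 : P.c false = 2) (h2 : P.d false = 1) (h3 : P.c true = 2) (h4 : P.d true = -1)
    {q : ℕ} (hq : 3 ≤ q) :
    ∃ z : Conf q, IsVertex Bd P z ∧ ∃ i : Fin q, z i = ((1/2 : ℝ), (1/4 : ℝ)) := by
  obtain ⟨⟨eL, tL, htL, hAL, hβL⟩, ⟨eR, tR, htR, hAR, hβR⟩, ⟨eB, tB, htB, hAB, hβB⟩⟩ :=
    exists_edges hBd
  set i0 : Fin q := ⟨0, by omega⟩ with hi0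
  set i1 : Fin q := ⟨1, by omega⟩ with hi1
  set i2 : Fin q := ⟨2, by omega⟩ with hi2
  have hne01 : i0 ≠ i1 := Fin.ne_of_val_ne (by norm_num)
  have hne02 : i0 ≠ i2 := Fin.ne_of_val_ne (by norm_num)
  have hne12 : i1 ≠ i2 := Fin.ne_of_val_ne (by norm_num)
  have hne21 : i2 ≠ i1 := hne12.symm
  have hlt02 : i0 < i2 := by rw [hi0, hi2]; exact Fin.mk_lt_mk.mpr (by norm_num)
  have hlt12 : i1 < i2 := by rw [hi1, hi2]; exact Fin.mk_lt_mk.mpr (by norm_num)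
  set z : Conf q := fun k =>
    if k = i1 then ((1:ℝ), (0:ℝ))
    else if k = i2 then ((1/2:ℝ), (1/4:ℝ)) else ((0:ℝ), (0:ℝ)) with hzdef
  have hzk : ∀ k, k ≠ i1 → k ≠ i2 → z k = ((0:ℝ), (0:ℝ)) := by
    intro k hk1 hk2
    simp only [hzdef]
    rw [if_neg hk1, if_neg hk2]
  have hz1 : z i1 = ((1:ℝ), (0:ℝ)) := by simp [hzdef]
  have hz2 : z i2 = ((1/2:ℝ), (1/4:ℝ)) := by simp [hzdef, hne21]
  have hz0 : z i0 = ((0:ℝ), (0:ℝ)) := hzk i0 hne01 hne02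
  refine ⟨z, ⟨?_, ?_⟩, i2, hz2⟩
  · intro k
    by_cases hk1 : k = i1
    · subst hk1
      rw [hz1]
      exact IOPAux.sq_mem hBd (by norm_num) (by norm_num) (by norm_num) (by norm_num)
    · by_cases hk2 : k = i2
      · subst hk2
        rw [hz2]
        exact IOPAux.sq_mem hBd (by norm_num) (by norm_num) (by norm_num) (by norm_num)
      · rw [hzk k hk1 hk2]
        exact IOPAux.sq_mem hBd le_rfl zero_le_one le_rfl zero_le_one
  · refine ⟨{h : Conf q × ℝ |
      (∃ k : Fin q, k ≠ i1 ∧ k ≠ i2 ∧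
        (h = (unitVec k (Bd.A eL), Bd.β eL) ∨ h = (unitVec k (Bd.A eB), Bd.β eB))) ∨
      h = (unitVec i1 (Bd.A eR), Bd.β eR) ∨ h = (unitVec i1 (Bd.A eB), Bd.β eB) ∨
      h = (attackNormal i0 i2 (P.anorm false), (0:ℝ)) ∨
      h = (attackNormal i1 i2 (P.anorm true), (0:ℝ))}, ?_, ?_⟩
    · intro h hh
      rcases hh with ⟨k, hk1, hk2, rfl | rfl⟩ | rfl | rfl | rfl | rfl
      · exact Or.inr ⟨k, eL, by rw [hzk k hk1 hk2, hAL, hβL]; simp [dotp], rfl⟩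
      · exact Or.inr ⟨k, eB, by rw [hzk k hk1 hk2, hAB, hβB]; simp [dotp], rfl⟩
      · exact Or.inr ⟨i1, eR, by rw [hz1, hAR, hβR]; simp [dotp], rfl⟩
      · exact Or.inr ⟨i1, eB, by rw [hz1, hAB, hβB]; simp [dotp], rfl⟩
      · refine Or.inl ⟨i0, i2, false, hlt02, ?_, rfl⟩
        rw [anorm_false h1 h2, hz0, hz2]
        norm_num [dotp, Prod.sub_def]
      · refine Or.inl ⟨i1, i2, true, hlt12, ?_, rfl⟩
        rw [anorm_true h3 h4, hz1, hz2]
        norm_num [dotp, Prod.sub_def]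
    · ext ww
      simp only [Set.mem_setOf_eq, Set.mem_singleton_iff]
      constructor
      · intro hww
        have hk0 : ∀ k, k ≠ i1 → k ≠ i2 → ww k = ((0:ℝ), (0:ℝ)) := by
          intro k hk1 hk2
          have e1 := hww _ (Or.inl ⟨k, hk1, hk2, Or.inl rfl⟩)
          have e2 := hww _ (Or.inl ⟨k, hk1, hk2, Or.inr rfl⟩)
          rw [IOPAux.confDot_unitVec, hAL, hβL] at e1
          rw [IOPAux.confDot_unitVec, hAB, hβB] at e2
          simp only [dotp] at e1 e2
          refine Prod.ext ?_ ?_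
          · have := mul_left_cancel₀ (ne_of_gt htL) (show tL * (ww k).1 = tL * 0 by linarith)
            simpa using this
          · have := mul_left_cancel₀ (ne_of_gt htB) (show tB * (ww k).2 = tB * 0 by linarith)
            simpa using this
        have e3 := hww _ (Or.inr (Or.inl rfl))
        have e4 := hww _ (Or.inr (Or.inr (Or.inl rfl)))
        rw [IOPAux.confDot_unitVec, hAR, hβR] at e3
        rw [IOPAux.confDot_unitVec, hAB, hβB] at e4
        simp only [dotp] at e3 e4
        have hw1 : ww i1 = ((1:ℝ), (0:ℝ)) := by
          refine Prod.ext ?_ ?_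
          · have := mul_left_cancel₀ (ne_of_gt htR) (show tR * (ww i1).1 = tR * 1 by linarith)
            simpa using this
          · have := mul_left_cancel₀ (ne_of_gt htB) (show tB * (ww i1).2 = tB * 0 by linarith)
            simpa using this
        have e5 := hww _ (Or.inr (Or.inr (Or.inr (Or.inl rfl))))
        have e6 := hww _ (Or.inr (Or.inr (Or.inr (Or.inr rfl))))
        rw [IOPAux.confDot_attack (ne_of_lt hlt02), anorm_false h1 h2,
          hk0 i0 hne01 hne02] at e5
        rw [IOPAux.confDot_attack (ne_of_lt hlt12), anorm_true h3 h4, hw1] at e6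
        simp only [dotp] at e5 e6
        have hw2 : ww i2 = ((1/2:ℝ), (1/4:ℝ)) := Prod.ext (by linarith) (by linarith)
        funext k
        by_cases hk1 : k = i1
        · subst hk1; rw [hz1]; exact hw1
        · by_cases hk2 : k = i2
          · subst hk2; rw [hz2]; exact hw2
          · rw [hzk k hk1 hk2]; exact hk0 k hk1 hk2
      · rintro rfl
        intro h hh
        rcases hh with ⟨k, hk1, hk2, rfl | rfl⟩ | rfl | rfl | rfl | rfl
        · rw [IOPAux.confDot_unitVec, hAL, hβL, hzk k hk1 hk2]; simp [dotp]
        · rw [IOPAux.confDot_unitVec, hAB, hβB, hzk k hk1 hk2]; simp [dotp]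
        · rw [IOPAux.confDot_unitVec, hAR, hβR, hz1]; simp [dotp]
        · rw [IOPAux.confDot_unitVec, hAB, hβB, hz1]; simp [dotp]
        · rw [IOPAux.confDot_attack (ne_of_lt hlt02), anorm_false h1 h2, hz0, hz2]
          norm_num [dotp, Prod.sub_def]
        · rw [IOPAux.confDot_attack (ne_of_lt hlt12), anorm_true h3 h4, hz1, hz2]
          norm_num [dotp, Prod.sub_def]

end IOPAux


/-- The denominator of the inside-out polytope for the lateral nightrider, with moves
`(2,1)` and `(2,-1)`, on the square board. -/
theorem iopDenom_lateral_nightrider (Bd : Board) (hBd : Bd.set = unitSq)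
    (P : Piece) (h1 : P.c false = 2) (h2 : P.d false = 1)
    (h3 : P.c true = 2) (h4 : P.d true = -1)
    (q : ℕ) (hq : 1 ≤ q) :
    IsIOPDenom Bd P q (if q = 1 then 1 else if q = 2 then 2 else 4) := by
  rcases Nat.lt_or_ge q 3 with hq3 | hq3
  · interval_cases q
    · -- q = 1
      rw [if_pos rfl]
      constructor
      · intro z hz i
        obtain ⟨hx, hy⟩ := IOPAux.vertex_q1 hBd hz i
        constructor
        · rcases hx with h | h
          · exact IOPAux.denDvd_intcast _ 0 (by rw [h]; norm_num) 1
          · exact IOPAux.denDvd_intcast _ 1 (by rw [h]; norm_num) 1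
        · rcases hy with h | h
          · exact IOPAux.denDvd_intcast _ 0 (by rw [h]; norm_num) 1
          · exact IOPAux.denDvd_intcast _ 1 (by rw [h]; norm_num) 1
      · intro D' _
        exact one_dvd D'
    · -- q = 2
      rw [if_neg (by norm_num), if_pos rfl]
      constructor
      · intro z hz i
        obtain ⟨⟨a, ha⟩, ⟨b, hb⟩⟩ := IOPAux.vertex_q2 hBd h1 h2 h3 h4 hz i
        constructor
        · exact IOPAux.denDvd_intcast _ a ha 2
        · exact IOPAux.denDvd_div _ b 2 (by norm_num)
            (by push_cast; rw [hb]; ring) (dvd_refl 2)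
      · intro D' hD'
        obtain ⟨z, hv, hz1⟩ := IOPAux.vertex2_exists hBd h1 h2
        have hd := (hD' z hv 1).2
        rw [hz1] at hd
        have hc : (((1:ℝ),(1/2:ℝ)) : Pt).2 = ((1/2:ℚ):ℝ) := by norm_num
        rw [hc] at hd
        have hdvd := IOPAux.dvd_of_denDvd hd
        have hden : ((1/2:ℚ)).den = 2 := by norm_num
        rwa [hden] at hdvd
  · -- q ≥ 3
    rw [if_neg (by omega), if_neg (by omega)]
    constructor
    · intro z hz i
      obtain ⟨⟨a, ha⟩, ⟨b, hb⟩⟩ := IOPAux.vertex_int hBd h1 h2 h3 h4 hz i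
      constructor
      · refine IOPAux.denDvd_div _ (a + b) 2 (by norm_num) ?_ (by norm_num)
        push_cast
        linarith
      · refine IOPAux.denDvd_div _ (a - b) 4 (by norm_num) ?_ (by norm_num)
        push_cast
        linarith
    · intro D' hD'
      obtain ⟨z, hv, i, hzi⟩ := IOPAux.vertex3_exists hBd h1 h2 h3 h4 hq3
      have hd := (hD' z hv i).2
      rw [hzi] at hd
      have hc : (((1/2:ℝ),(1/4:ℝ)) : Pt).2 = ((1/4:ℚ):ℝ) := by norm_num
      rw [hc] at hd
      have hdvd := IOPAux.dvd_of_denDvd hd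
      have hden : ((1/4:ℚ)).den = 4 := by norm_num
      rwa [hden] at hdvd

end
end
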